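/- arXiv:1409.5404 — 9 statements merged into one kernel-verified Lean document; each statement's English description precedes it below -/
import Mathlib

section
/- Let p = 3, V = (ZMod 3) × (ZMod 3), V₀ its set of nonzero elements, and let φ : ℤ[V₀] → ℤ[V₀] be the additive map sending the generator at v to the sum of the generators at all u ∈ V₀ with ω(v,u) = 1. Then φ is injective, the range of φ is contained in K = ker s, and the range of φ has index 3 as a subgroup of K. -/
/-!
Let `level c` be the `0/1` matrix of the relation `ω(v,u) = c` on `V₀`, so that `φ` is
`A = level 1`, and let `B = level 2 - level 0`. A finite computation gives `AB = BA = 3`, so `φ`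
is injective. The support of each column of `A` is an affine line of `𝔽₃²` avoiding `0`; its
three points sum to `0`, so `range φ` lies in `K` and in the kernel of the augmentation `ε`
mod `3`. Conversely `B ≡ 2 + ω(v,u)` mod `3`, so `Bx ≡ 0` mod `3` for `x ∈ K` with `ε(x) ≡ 0`,
and then `x = A(Bx/3)`. Hence `range φ = K ∩ ker (ε mod 3)`, and since `ε` maps `K` onto
`ZMod 3` the index is `3`.
-/

open Finset

section General

variable {R M N : Type*} [CommRing R] [IsDomain R] [AddCommGroup M] [AddCommGroup N]
  [Module R M] [Module R N] {φ : M →ₗ[R] N} {ψ : N →ₗ[R] M} {n : R}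

theorem LinearMap.injective_of_comp_eq_smul [Module.IsTorsionFree R M] (hn : n ≠ 0)
    (h : ψ ∘ₗ φ = n • LinearMap.id) : Function.Injective φ := fun x y hxy ↦
  smul_right_injective M hn <| by simpa [← LinearMap.comp_apply, h] using congr(ψ $hxy)

theorem LinearMap.apply_eq_of_comp_eq_smul [Module.IsTorsionFree R N] (hn : n ≠ 0)
    (h : φ ∘ₗ ψ = n • LinearMap.id) {x : N} {y : M} (hy : ψ x = n • y) : φ y = x :=
  smul_right_injective N hn <| by simp [← map_smul, ← hy, ← LinearMap.comp_apply, h]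

end General

theorem Finsupp.exists_eq_smul_of_forall_dvd {α : Type*} {n : ℤ} {x : α →₀ ℤ}
    (h : ∀ a, n ∣ x a) : ∃ y : α →₀ ℤ, x = n • y :=
  ⟨x.mapRange (· / n) (Int.zero_ediv n), Finsupp.ext fun a ↦ by simp [Int.mul_ediv_cancel' (h a)]⟩

theorem Matrix.toLin_basisSingleOne_apply {R ι : Type*} [CommRing R] [Fintype ι] [DecidableEq ι]
    (M : Matrix ι ι R) (x : ι →₀ R) (i : ι) :
    Matrix.toLin Finsupp.basisSingleOne Finsupp.basisSingleOne M x i = ∑ j, M i j * x j := by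
  simp [Matrix.toLin_apply, Matrix.mulVec, dotProduct, Finsupp.single_apply]

namespace SymplecticF3

abbrev V := ZMod 3 × ZMod 3

abbrev V₀ := {v : V // v ≠ 0}

def ω (v u : V) : ZMod 3 := v.1 * u.2 - v.2 * u.1

def level (c : ZMod 3) : Matrix V₀ V₀ ℤ := Matrix.of fun u v ↦ if ω v u = c then 1 else 0

noncomputable abbrev toEnd (M : Matrix V₀ V₀ ℤ) : (V₀ →₀ ℤ) →ₗ[ℤ] V₀ →₀ ℤ :=
  Matrix.toLin Finsupp.basisSingleOne Finsupp.basisSingleOne M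

noncomputable def sumMap : (V₀ →₀ ℤ) →ₗ[ℤ] V := Finsupp.linearCombination ℤ fun v ↦ (v : V)

noncomputable def augmentation : (V₀ →₀ ℤ) →ₗ[ℤ] ZMod 3 :=
  Finsupp.linearCombination ℤ fun _ ↦ 1

lemma level_one_mul_level_two_sub_level_zero : level 1 * (level 2 - level 0) = 3 := by decide

lemma level_two_sub_level_zero_mul_level_one : (level 2 - level 0) * level 1 = 3 := by decide

lemma intCast_level_two_sub_level_zero :
    ∀ u v : V₀, (((level 2 - level 0) u v : ℤ) : ZMod 3) = 2 + ω v u := by decide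

lemma sum_level_one_smul : ∀ v : V₀, ∑ u, level 1 u v • (u : V) = 0 := by decide

lemma sum_level_one : ∀ v : V₀, ∑ u, level 1 u v = 3 := by decide

lemma toEnd_single (M : Matrix V₀ V₀ ℤ) (v : V₀) :
    toEnd M (Finsupp.single v 1) = ∑ u, M u v • Finsupp.single u 1 := by
  simpa using Matrix.toLin_self Finsupp.basisSingleOne Finsupp.basisSingleOne M v

lemma toEnd_comp_toEnd_eq_three_smul {M N : Matrix V₀ V₀ ℤ} (h : M * N = 3) :
    toEnd M ∘ₗ toEnd N = (3 : ℤ) • LinearMap.id := by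
  rw [← Matrix.toLin_mul, h, show (3 : Matrix V₀ V₀ ℤ) = (3 : ℤ) • 1 by simp, map_smul,
    Matrix.toLin_one]

lemma linearCombination_eq_toEnd_level (c : ZMod 3) :
    Finsupp.linearCombination ℤ (fun v : V₀ ↦
      ∑ u ∈ univ.filter (fun u : V₀ ↦ ω v u = c), Finsupp.single u (1 : ℤ)) = toEnd (level c) := by
  refine Finsupp.basisSingleOne.ext fun v ↦ ?_
  simp [toEnd_single, Finset.sum_filter, level, ite_smul]

lemma sumMap_comp_toEnd_level_one : sumMap ∘ₗ toEnd (level 1) = 0 := by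
  refine Finsupp.basisSingleOne.ext fun v ↦ ?_
  simpa [toEnd_single, sumMap] using sum_level_one_smul v

lemma augmentation_comp_toEnd_level_one : augmentation ∘ₗ toEnd (level 1) = 0 := by
  refine Finsupp.basisSingleOne.ext fun v ↦ ?_
  simpa [toEnd_single, augmentation] using congr(($(sum_level_one v) : ZMod 3)).trans (by decide)

lemma intCast_toEnd_apply (x : V₀ →₀ ℤ) (u : V₀) :
    ((toEnd (level 2 - level 0) x u : ℤ) : ZMod 3) = 2 * augmentation x + ω (sumMap x) u := by
  induction x using Finsupp.induction_linear with
  | zero => simp [ω]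
  | add x y hx hy =>
    simp only [map_add, Finsupp.add_apply, Int.cast_add, hx, hy, ω, Prod.fst_add, Prod.snd_add]
    ring
  | single v n =>
    have hB := intCast_level_two_sub_level_zero u v
    simp only [Matrix.sub_apply, Int.cast_sub, ω] at hB
    simp [Matrix.toLin_basisSingleOne_apply, Finsupp.single_apply, augmentation, sumMap, ω]
    linear_combination (n : ZMod 3) * hB

lemma range_toEnd_level_one :
    LinearMap.range (toEnd (level 1)) = LinearMap.ker sumMap ⊓ LinearMap.ker augmentation := by
  refine le_antisymm (le_inf ?_ ?_) ?_
  · exact LinearMap.range_le_ker_iff.mpr sumMap_comp_toEnd_level_one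
  · exact LinearMap.range_le_ker_iff.mpr augmentation_comp_toEnd_level_one
  · rintro x ⟨hs, hε⟩
    have hdvd (u : V₀) : (3 : ℤ) ∣ toEnd (level 2 - level 0) x u := by
      refine (ZMod.intCast_zmod_eq_zero_iff_dvd _ 3).mp ?_
      rw [intCast_toEnd_apply, LinearMap.mem_ker.mp hs, LinearMap.mem_ker.mp hε]
      simp [ω]
    obtain ⟨y, hy⟩ := Finsupp.exists_eq_smul_of_forall_dvd hdvd
    exact ⟨y, LinearMap.apply_eq_of_comp_eq_smul three_ne_zero
      (toEnd_comp_toEnd_eq_three_smul level_one_mul_level_two_sub_level_zero) hy⟩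

lemma exists_mem_ker_sumMap_augmentation_eq_one :
    ∃ x ∈ LinearMap.ker sumMap, augmentation x = 1 :=
  ⟨Finsupp.single ⟨(1, 0), by decide⟩ 1 + Finsupp.single ⟨(0, 1), by decide⟩ 1
    - Finsupp.single ⟨(1, 1), by decide⟩ 1, by simp [sumMap], by simp [augmentation]⟩

lemma relIndex_ker_augmentation :
    (LinearMap.ker augmentation).toAddSubgroup.relIndex (LinearMap.ker sumMap).toAddSubgroup
      = 3 := by
  obtain ⟨x, hx, hx1⟩ := exists_mem_ker_sumMap_augmentation_eq_one
  have hsurj : (LinearMap.ker sumMap).toAddSubgroup.map augmentation.toAddMonoidHom = ⊤ :=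
    eq_top_iff.mpr fun z _ ↦ ⟨z.val • x, Submodule.smul_of_tower_mem _ _ hx, by simp [hx1]⟩
  rw [show (LinearMap.ker augmentation).toAddSubgroup = augmentation.toAddMonoidHom.ker from rfl,
    AddSubgroup.relIndex_ker, hsurj, Nat.card_congr AddSubgroup.topEquiv.toEquiv, Nat.card_zmod]

end SymplecticF3

open SymplecticF3

/-- For `p = 3`, the map `φ : ℤ[V₀] → ℤ[V₀]` sending the generator at `v` to the sum of
the generators at all `u` with `ω(v,u) = 1` is injective, its range is contained in
`K = ker s` (where `s` is the summation map), and its range has index `3` in `K`. -/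
theorem stmt5
    (s : ({v : ZMod 3 × ZMod 3 // v ≠ 0} →₀ ℤ) →ₗ[ℤ] ZMod 3 × ZMod 3)
    (hs : s = Finsupp.linearCombination ℤ
      (fun v : {v : ZMod 3 × ZMod 3 // v ≠ 0} => (v : ZMod 3 × ZMod 3)))
    (φ : ({v : ZMod 3 × ZMod 3 // v ≠ 0} →₀ ℤ) →ₗ[ℤ] ({v : ZMod 3 × ZMod 3 // v ≠ 0} →₀ ℤ))
    (hφ : φ = Finsupp.linearCombination ℤ
      (fun v : {v : ZMod 3 × ZMod 3 // v ≠ 0} =>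
        ∑ u ∈ Finset.univ.filter (fun u : {v : ZMod 3 × ZMod 3 // v ≠ 0} =>
            (v : ZMod 3 × ZMod 3).1 * (u : ZMod 3 × ZMod 3).2
              - (v : ZMod 3 × ZMod 3).2 * (u : ZMod 3 × ZMod 3).1 = 1),
          Finsupp.single u (1 : ℤ))) :
    Function.Injective φ ∧
    LinearMap.range φ ≤ LinearMap.ker s ∧
    ((LinearMap.range φ).toAddSubgroup.addSubgroupOf
        (LinearMap.ker s).toAddSubgroup).index = 3 := by
  have hφ' : φ = toEnd (level 1) := hφ.trans (linearCombination_eq_toEnd_level 1)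
  have hs' : s = sumMap := hs
  subst hφ' hs'
  refine ⟨LinearMap.injective_of_comp_eq_smul three_ne_zero
    (toEnd_comp_toEnd_eq_three_smul level_two_sub_level_zero_mul_level_one), ?_, ?_⟩
  · rw [range_toEnd_level_one]
    exact inf_le_left
  · change AddSubgroup.relIndex _ _ = 3
    rw [range_toEnd_level_one, inf_comm]
    exact (AddSubgroup.inf_relIndex_right (LinearMap.ker augmentation).toAddSubgroup
      (LinearMap.ker sumMap).toAddSubgroup).trans relIndex_ker_augmentation
end

section
/- Let G be a finite group acting transitively on a nonempty finite type E with cardinality w. For every natural number n, the number of multisets over E of cardinality n that are fixed by the action of every element of G equals 1 if w divides n, and 0 otherwise. -/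
/-!
By transitivity, a multiset fixed by `G` has the same multiplicity `c` at every point, so it is
`c • univ` and has cardinality `c * |E|`. Hence the fixed multisets of cardinality `n` are
determined by `n`, and one exists exactly when `|E| ∣ n`.
-/

namespace Multiset

variable {G E : Type*} [Group G] [MulAction G E]

theorem count_eq_of_forall_map_smul_eq [DecidableEq E] [MulAction.IsPretransitive G E]
    {m : Multiset E} (hm : ∀ g : G, m.map (g • ·) = m) (x y : E) :
    m.count x = m.count y := by
  obtain ⟨g, rfl⟩ := MulAction.exists_smul_eq G x y
  rw [← hm g, count_map_eq_count' _ _ (MulAction.injective g), hm g]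

variable [Fintype E]

theorem eq_count_nsmul_univ_of_forall_map_smul_eq [DecidableEq E] [MulAction.IsPretransitive G E]
    {m : Multiset E} (hm : ∀ g : G, m.map (g • ·) = m) (x : E) :
    m = m.count x • (Finset.univ : Finset E).val := by
  ext y
  rw [count_nsmul, count_univ, mul_one, count_eq_of_forall_map_smul_eq hm y x]

theorem card_eq_count_mul_card_of_forall_map_smul_eq [DecidableEq E]
    [MulAction.IsPretransitive G E] {m : Multiset E} (hm : ∀ g : G, m.map (g • ·) = m) (x : E) :
    card m = m.count x * Fintype.card E := by
  conv_lhs => rw [eq_count_nsmul_univ_of_forall_map_smul_eq hm x]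
  rw [card_nsmul, Finset.card_val, Finset.card_univ]

theorem card_dvd_card_of_forall_map_smul_eq [MulAction.IsPretransitive G E] {m : Multiset E}
    (hm : ∀ g : G, m.map (g • ·) = m) : Fintype.card E ∣ card m := by
  classical
  obtain _ | ⟨⟨x⟩⟩ := isEmpty_or_nonempty E
  · simp [eq_zero_of_forall_notMem (s := m) isEmptyElim]
  · exact Dvd.intro_left _ (card_eq_count_mul_card_of_forall_map_smul_eq hm x).symm

theorem eq_of_forall_map_smul_eq_of_card_eq [MulAction.IsPretransitive G E]
    {m m' : Multiset E} (hm : ∀ g : G, m.map (g • ·) = m) (hm' : ∀ g : G, m'.map (g • ·) = m')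
    (hcard : card m = card m') : m = m' := by
  classical
  ext x
  have hpos : 0 < Fintype.card E := Fintype.card_pos_iff.mpr ⟨x⟩
  rw [card_eq_count_mul_card_of_forall_map_smul_eq hm x,
    card_eq_count_mul_card_of_forall_map_smul_eq hm' x] at hcard
  exact Nat.eq_of_mul_eq_mul_right hpos hcard

theorem map_smul_nsmul_univ (k : ℕ) (g : G) :
    (k • (Finset.univ : Finset E).val).map (g • ·) = k • (Finset.univ : Finset E).val := by
  rw [map_nsmul]
  exact congrArg (k • ·) (map_univ_val_equiv (MulAction.toPerm g))

end Multiset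

open Multiset

theorem stmt7_general {G E : Type*} [Group G] [Fintype E]
    [MulAction G E] (htrans : ∀ x y : E, ∃ g : G, g • x = y) (n : ℕ) :
    Nat.card {m : Multiset E // Multiset.card m = n ∧
        ∀ g : G, m.map (fun x => g • x) = m}
      = if Fintype.card E ∣ n then 1 else 0 := by
  have : MulAction.IsPretransitive G E := ⟨htrans⟩
  split_ifs with hdvd
  · refine Nat.card_eq_one_iff_unique.mpr ⟨⟨fun m m' => Subtype.ext ?_⟩, ⟨?_⟩⟩
    · exact eq_of_forall_map_smul_eq_of_card_eq m.2.2 m'.2.2 (m.2.1.trans m'.2.1.symm)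
    · refine ⟨(n / Fintype.card E) • Finset.univ.val, ?_, map_smul_nsmul_univ _⟩
      rw [card_nsmul, Finset.card_val, Finset.card_univ, Nat.div_mul_cancel hdvd]
  · have : IsEmpty {m : Multiset E // Multiset.card m = n ∧ ∀ g : G, m.map (g • ·) = m} :=
      ⟨fun m => hdvd (m.2.1 ▸ card_dvd_card_of_forall_map_smul_eq m.2.2)⟩
    exact Nat.card_of_isEmpty

/-- If a finite group `G` acts transitively on a nonempty finite type `E` of cardinality
`w`, then for every `n` the number of `G`-fixed multisets over `E` of cardinality `n`
is `1` if `w ∣ n` and `0` otherwise. -/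
theorem stmt7 {G E : Type*} [Group G] [Fintype G] [Fintype E] [Nonempty E]
    [MulAction G E] (htrans : ∀ x y : E, ∃ g : G, g • x = y) (n : ℕ) :
    Nat.card {m : Multiset E // Multiset.card m = n ∧
        ∀ g : G, m.map (fun x => g • x) = m}
      = if Fintype.card E ∣ n then 1 else 0 :=
  stmt7_general htrans n
end

section
/- Let G be a finite group acting on a finite type E, and let n be a natural number. The number of multisets over E of cardinality n that are fixed by the action of every element of G equals the number of functions c from the set of G-orbits of E to ℕ such that the sum over all orbits O of c(O)·|O| equals n. Equivalently, if the orbits have cardinalities w₁, …, w_r, the number of G-fixed multisets of cardinality n equals the number of r-tuples (k₁, …, k_r) of natural numbers with k₁w₁ + ⋯ + k_rw_r = n. -/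
/-!
A multiset on a finite type is the same as its count function `E → ℕ`. It is fixed by `G`
exactly when the count is constant on orbits, i.e. factors through a function `c` on the orbit
quotient, and its cardinality is then `∑ O, c O * |O|`.
-/

open Finset MulAction

theorem Setoid.sum_comp_mk {α : Type*} [Fintype α] (r : Setoid α) [Fintype (Quotient r)]
    (c : Quotient r → ℕ) :
    ∑ x, c (Quotient.mk r x) = ∑ O, c O * Nat.card {x // Quotient.mk r x = O} := by
  classical
  rw [← sum_fiberwise univ (Quotient.mk r)]
  refine sum_congr rfl fun O _ => ?_
  rw [sum_congr rfl fun x hx => congrArg c (mem_filter.mp hx).2, sum_const, smul_eq_mul,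
    mul_comm, Nat.card_eq_fintype_card, Fintype.card_subtype]

namespace Multiset

variable {G E : Type*} [Group G] [MulAction G E] [DecidableEq E]

theorem map_smul_eq_self_iff {g : G} {m : Multiset E} :
    m.map (g • ·) = m ↔ ∀ x, m.count (g • x) = m.count x := by
  rw [Multiset.ext, (MulAction.bijective g).surjective.forall]
  simp only [count_map_eq_count' _ _ (MulAction.injective g)]
  exact forall_congr' fun _ => eq_comm

theorem forall_map_smul_eq_self_iff {m : Multiset E} :
    (∀ g : G, m.map (g • ·) = m) ↔ orbitRel G E ≤ Setoid.ker (m.count ·) := by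
  simp only [map_smul_eq_self_iff, Setoid.le_def, Setoid.ker_def, orbitRel_apply, mem_orbit_iff]
  constructor
  · rintro h x y ⟨g, rfl⟩
    exact h g y
  · exact fun h g y => h ⟨g, rfl⟩

variable [Fintype E]

theorem card_eq_sum_count (m : Multiset E) : card m = ∑ x, m.count x :=
  (sum_count_eq_card fun x _ => mem_univ x).symm

variable (G E) in
noncomputable def fixedEquivOrbitFun :
    {m : Multiset E // ∀ g : G, m.map (g • ·) = m} ≃ (Quotient (orbitRel G E) → ℕ) :=
  ((toFinsupp.toEquiv.trans Finsupp.equivFunOnFinite).subtypeEquiv fun _ =>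
    forall_map_smul_eq_self_iff).trans (Setoid.liftEquiv _)

theorem card_eq_sum_fixedEquivOrbitFun [Fintype (Quotient (orbitRel G E))]
    (m : {m : Multiset E // ∀ g : G, m.map (g • ·) = m}) :
    card m.1 =
      ∑ O, fixedEquivOrbitFun G E m O * Nat.card {x // Quotient.mk (orbitRel G E) x = O} := by
  rw [← Setoid.sum_comp_mk, card_eq_sum_count]
  rfl

end Multiset

theorem stmt8_general {G E : Type*} [Group G] [Fintype E] [MulAction G E]
    [Fintype (Quotient (MulAction.orbitRel G E))] (n : ℕ) :
    Nat.card {m : Multiset E // Multiset.card m = n ∧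
        ∀ g : G, m.map (fun x => g • x) = m}
      = Nat.card {c : Quotient (MulAction.orbitRel G E) → ℕ //
          ∑ O : Quotient (MulAction.orbitRel G E),
            c O * Nat.card {x : E // Quotient.mk (MulAction.orbitRel G E) x = O} = n} := by
  classical
  refine Nat.card_congr <| (Equiv.subtypeEquivRight fun _ => and_comm).trans <|
    (Equiv.subtypeSubtypeEquivSubtypeInter _ (fun m => Multiset.card m = n)).symm.trans <|
    (Multiset.fixedEquivOrbitFun G E).subtypeEquiv fun m => ?_
  rw [Multiset.card_eq_sum_fixedEquivOrbitFun]

/-- For a finite group `G` acting on a finite type `E`, the number of `G`-fixed multisets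
over `E` of cardinality `n` equals the number of functions `c` from the set of `G`-orbits
to `ℕ` with `∑ O, c O * |O| = n`. -/
theorem stmt8 {G E : Type*} [Group G] [Fintype G] [Fintype E] [MulAction G E]
    [Fintype (Quotient (MulAction.orbitRel G E))] (n : ℕ) :
    Nat.card {m : Multiset E // Multiset.card m = n ∧
        ∀ g : G, m.map (fun x => g • x) = m}
      = Nat.card {c : Quotient (MulAction.orbitRel G E) → ℕ //
          ∑ O : Quotient (MulAction.orbitRel G E),
            c O * Nat.card {x : E // Quotient.mk (MulAction.orbitRel G E) x = O} = n} :=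
  stmt8_general n
end

section
/- For every natural number n and every rational number q ≥ 2, the following identity holds in ℚ: q^(n²) / ∏_{i=0}^{n−1} (qⁿ − q^i) = ∑_{i=0}^{n} q^(i(i−1)) / ∏_{j=0}^{i−1} (q^i − q^j), where empty products equal 1. -/
/-!
Write `P n = ∏_{i<n} (qⁿ - qⁱ)`. Pulling `q` out of every factor but the first gives
`P (n+1) = (q^(n+1) - 1) qⁿ P n`, so `q^((n+1)²) - q^((n+1)n) = q^(n²) · P (n+1) / P n`,
which says that the left-hand side grows by exactly the `(n+1)`-st summand when `n` increases.
-/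

open Finset

section

variable {K : Type*}

theorem prod_range_succ_pow_sub_pow [CommRing K] (q : K) (n : ℕ) :
    ∏ j ∈ range (n + 1), (q ^ (n + 1) - q ^ j)
      = (q ^ (n + 1) - 1) * q ^ n * ∏ j ∈ range n, (q ^ n - q ^ j) := by
  rw [prod_range_succ', pow_zero]
  have hfactor : ∀ j ∈ range n, q ^ (n + 1) - q ^ (j + 1) = q * (q ^ n - q ^ j) :=
    fun j _ => by ring
  rw [prod_congr rfl hfactor, prod_mul_distrib, prod_const, card_range]
  ring

theorem prod_range_pow_sub_pow_ne_zero [CommRing K] [IsDomain K] {q : K}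
    (hq : Function.Injective (q ^ · : ℕ → K)) (n : ℕ) :
    ∏ j ∈ range n, (q ^ n - q ^ j) ≠ 0 :=
  prod_ne_zero_iff.2 fun _ hj =>
    sub_ne_zero.2 fun h => (mem_range.1 hj).ne' (hq h)

theorem pow_sq_div_prod_eq_sum [Field K] {q : K} (hq : Function.Injective (q ^ · : ℕ → K))
    (n : ℕ) :
    q ^ (n ^ 2) / ∏ i ∈ range n, (q ^ n - q ^ i)
      = ∑ i ∈ range (n + 1), q ^ (i * (i - 1)) / ∏ j ∈ range i, (q ^ i - q ^ j) := by
  induction n with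
  | zero => simp
  | succ n ih =>
    have hP := prod_range_pow_sub_pow_ne_zero hq n
    have hP' := prod_range_pow_sub_pow_ne_zero hq (n + 1)
    rw [sum_range_succ, ← ih, Nat.add_sub_cancel, div_add_div _ _ hP hP',
      div_eq_div_iff hP' (mul_ne_zero hP hP'), prod_range_succ_pow_sub_pow]
    ring

end

/-- For every `n : ℕ` and rational `q ≥ 2`,
`q^(n²) / ∏_{i<n} (qⁿ − q^i) = ∑_{i≤n} q^(i(i−1)) / ∏_{j<i} (q^i − q^j)`. -/
theorem stmt9 (n : ℕ) (q : ℚ) (hq : 2 ≤ q) :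
    q ^ (n ^ 2) / ∏ i ∈ Finset.range n, (q ^ n - q ^ i)
      = ∑ i ∈ Finset.range (n + 1),
          q ^ (i * (i - 1)) / ∏ j ∈ Finset.range i, (q ^ i - q ^ j) :=
  pow_sq_div_prod_eq_sum (pow_right_injective₀ (by linarith) (by linarith)) n
end

section
/- Let k be a field in which 6 is invertible and let f = X₀X₁X₂ ∈ k[X₀,X₁,X₂]. Then the stabilizer up to scalar S_f = {g ∈ GL₃(k) : ∃ c ∈ kˣ, f·g = c·f} equals the subgroup of monomial matrices in GL₃(k), i.e., the invertible matrices having exactly one nonzero entry in each row and each column. -/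
/-!
If `g` rescales `∏ Xᵢ`, then each `X j` is a prime factor of `∏ᵢ (g·X)ᵢ`, so it divides one of
the linear forms `(g·X)_{t j}`; that row of `g` is then supported on `{j}`. Since no row of an
invertible matrix vanishes, `t` is injective, hence a permutation, and `g` is monomial.
Conversely a monomial matrix permutes the variables up to nonzero scalars.
-/

open MvPolynomial

namespace Matrix

variable {n R : Type*}

def IsMonomial [Zero R] (M : Matrix n n R) : Prop :=
  ∃ σ : Equiv.Perm n, ∀ i j, M i j ≠ 0 ↔ j = σ i

theorem isMonomial_iff_existsUnique [Zero R] {M : Matrix n n R} :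
    M.IsMonomial ↔ (∀ i, ∃! j, M i j ≠ 0) ∧ (∀ j, ∃! i, M i j ≠ 0) := by
  constructor
  · rintro ⟨σ, hσ⟩
    refine ⟨fun i => ⟨σ i, (hσ i _).2 rfl, fun j hj => (hσ i j).1 hj⟩,
      fun j => ⟨σ.symm j, (hσ _ j).2 (σ.apply_symm_apply j).symm, fun i hi => ?_⟩⟩
    rw [(hσ i j).1 hi, σ.symm_apply_apply]
  · rintro ⟨hrow, hcol⟩
    choose f hf hf_unique using hrow
    have hinj : Function.Injective f := fun i i' h =>
      (hcol (f i)).unique (hf i) (h ▸ hf i')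
    have hsurj : Function.Surjective f := fun j =>
      let ⟨i, hi, _⟩ := hcol j
      ⟨i, (hf_unique i j hi).symm⟩
    exact ⟨Equiv.ofBijective f ⟨hinj, hsurj⟩, fun i j =>
      ⟨hf_unique i j, fun h => h ▸ hf i⟩⟩

theorem exists_ne_zero_of_isUnit_det [CommRing R] [Nontrivial R] [Fintype n] [DecidableEq n]
    {M : Matrix n n R} (hM : IsUnit M.det) (i : n) : ∃ j, M i j ≠ 0 := by
  by_contra! h
  exact not_isUnit_zero (det_eq_zero_of_row_eq_zero i h ▸ hM)

theorem isMonomial_of_row_support [Zero R] [Finite n] {M : Matrix n n R}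
    (hrow : ∀ i, ∃ j, M i j ≠ 0) (t : n → n) (ht : ∀ j l, l ≠ j → M (t j) l = 0) :
    M.IsMonomial := by
  have hdiag : ∀ j, M (t j) j ≠ 0 := fun j => by
    obtain ⟨l, hl⟩ := hrow (t j)
    obtain rfl | hlj := eq_or_ne l j
    · exact hl
    · exact absurd (ht j l hlj) hl
  have hinj : Function.Injective t := fun j j' h => by
    by_contra hne
    exact hdiag j (h ▸ ht j' j hne)
  let τ := Equiv.ofBijective t (Finite.injective_iff_bijective.mp hinj)
  refine ⟨τ.symm, fun i l => ?_⟩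
  obtain ⟨j, rfl⟩ := τ.surjective i
  rw [τ.symm_apply_apply]
  exact ⟨fun h => by_contra fun hne => h (ht j l hne), fun h => h ▸ hdiag j⟩

end Matrix

namespace MvPolynomial

variable {σ R : Type*}

theorem coeff_single_one_eq_zero_of_X_dvd [CommSemiring R] {p : MvPolynomial σ R} {j l : σ}
    (hlj : l ≠ j) (h : X j ∣ p) : coeff (Finsupp.single l 1) p = 0 := by
  classical
  obtain ⟨q, rfl⟩ := h
  rw [mul_comm, coeff_mul_X']
  simp [hlj.symm]

theorem coeff_single_one_sum_C_mul_X [CommSemiring R] [Fintype σ] (v : σ → R) (l : σ) :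
    coeff (Finsupp.single l 1) (∑ j, C (v j) * X j) = v l := by
  classical
  simp [coeff_sum, coeff_C_mul, coeff_X, Finsupp.single_eq_single_iff]

theorem exists_X_dvd_of_prod_eq_smul_prod_X [CommRing R] [IsDomain R] [Fintype σ]
    {L : σ → MvPolynomial σ R} {c : R} (h : ∏ i, L i = c • ∏ i, X i) (j : σ) :
    ∃ i, X j ∣ L i := by
  have hdvd : X j ∣ ∏ i, L i := by
    rw [h, smul_eq_C_mul]
    exact (Finset.dvd_prod_of_mem X (Finset.mem_univ j)).mul_left _
  simpa using (X_prime (R := R)).dvd_finsetProd_iff L |>.mp hdvd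

end MvPolynomial

section

variable {n k : Type*} [Fintype n] [Field k]

theorem Matrix.IsMonomial.exists_prod_sum_C_mul_X_eq_smul {M : Matrix n n k} (hM : M.IsMonomial) :
    ∃ c : kˣ, ∏ i, ∑ j, C (M i j) * X j = (c : k) • ∏ i, (X i : MvPolynomial n k) := by
  obtain ⟨σ, hσ⟩ := hM
  have hrow : ∀ i, ∑ j, C (M i j) * X j = C (M i (σ i)) * (X (σ i) : MvPolynomial n k) :=
    fun i => Finset.sum_eq_single (σ i)
      (fun j _ hj => by rw [not_not.mp (mt (hσ i j).1 hj), map_zero, zero_mul]) (by simp)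
  have hc : ∏ i, M i (σ i) ≠ 0 := Finset.prod_ne_zero_iff.mpr fun i _ => (hσ i _).2 rfl
  refine ⟨Units.mk0 _ hc, ?_⟩
  simp only [hrow, Finset.prod_mul_distrib, Units.val_mk0, smul_eq_C_mul, map_prod,
    Equiv.prod_comp σ (fun i => (X i : MvPolynomial n k))]

theorem exists_aeval_prod_X_eq_smul_iff_isMonomial [DecidableEq n] (g : GL n k) :
    (∃ c : kˣ, aeval (fun i => ∑ j, C ((g : Matrix n n k) i j) * X j) (∏ i, X i : MvPolynomial n k)
        = (c : k) • ∏ i, (X i : MvPolynomial n k)) ↔ (g : Matrix n n k).IsMonomial := by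
  simp only [map_prod, aeval_X]
  refine ⟨fun ⟨c, hc⟩ => ?_, Matrix.IsMonomial.exists_prod_sum_C_mul_X_eq_smul⟩
  choose t ht using exists_X_dvd_of_prod_eq_smul_prod_X hc
  refine Matrix.isMonomial_of_row_support
    (Matrix.exists_ne_zero_of_isUnit_det (Matrix.GeneralLinearGroup.det g).isUnit) t
    fun j l hlj => ?_
  simpa only [coeff_single_one_sum_C_mul_X] using coeff_single_one_eq_zero_of_X_dvd hlj (ht j)

end

theorem stmt10_general (k : Type*) [Field k] :
    {g : GL (Fin 3) k | ∃ c : kˣ,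
        aeval (fun i => ∑ j : Fin 3, C ((g : Matrix (Fin 3) (Fin 3) k) i j) * X j)
            (X 0 * X 1 * X 2 : MvPolynomial (Fin 3) k)
          = (c : k) • (X 0 * X 1 * X 2 : MvPolynomial (Fin 3) k)}
    = {g : GL (Fin 3) k |
        (∀ i, ∃! j, (g : Matrix (Fin 3) (Fin 3) k) i j ≠ 0) ∧
        (∀ j, ∃! i, (g : Matrix (Fin 3) (Fin 3) k) i j ≠ 0)} := by
  have hprod : (X 0 * X 1 * X 2 : MvPolynomial (Fin 3) k) = ∏ i, X i :=
    (Fin.prod_univ_three X).symm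
  ext g
  rw [Set.mem_ofPred_eq, Set.mem_ofPred_eq, hprod, exists_aeval_prod_X_eq_smul_iff_isMonomial,
    Matrix.isMonomial_iff_existsUnique]

/-- Over a field `k` with `6` invertible, the stabilizer up to scalar of the cubic form
`X₀X₁X₂` under the substitution action of `GL₃(k)` is exactly the subgroup of monomial
matrices (exactly one nonzero entry in each row and each column). -/
theorem stmt10 (k : Type*) [Field k] (h6 : IsUnit (6 : k)) :
    {g : GL (Fin 3) k | ∃ c : kˣ,
        aeval (fun i => ∑ j : Fin 3, C ((g : Matrix (Fin 3) (Fin 3) k) i j) * X j)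
            (X 0 * X 1 * X 2 : MvPolynomial (Fin 3) k)
          = (c : k) • (X 0 * X 1 * X 2 : MvPolynomial (Fin 3) k)}
    = {g : GL (Fin 3) k |
        (∀ i, ∃! j, (g : Matrix (Fin 3) (Fin 3) k) i j ≠ 0) ∧
        (∀ j, ∃! i, (g : Matrix (Fin 3) (Fin 3) k) i j ≠ 0)} :=
  stmt10_general k
end

section
/- Let k be a field in which 6 is invertible and let f = X₀²X₂ + X₁³ ∈ k[X₀,X₁,X₂]. Then the stabilizer up to scalar S_f = {g ∈ GL₃(k) : ∃ c ∈ kˣ, f·g = c·f} consists exactly of the invertible diagonal matrices diag(a,b,c) with a²c = b³; moreover the quotient group S_f/Z by the subgroup Z of invertible scalar matrices is isomorphic to the multiplicative group kˣ (via t ↦ diag(t³, t², 1) modulo scalars). -/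
/-!
Taking third partial derivatives turns `f·g = c·f` into the identity
`P(g eₚ, g e_q, g eᵣ) = c · P(eₚ, e_q, eᵣ)` for the polar trilinear form `P` of
`f = X₀²X₂ + X₁³`. Since `P(e₂, e₂, ·) = 0` and `g` is invertible, the linear form
`P(g e₂, g e₂, ·)` vanishes, which kills the off-diagonal entries of the last column; the
remaining values of `P` then force `g = diag(a, b, c)` with `a²c = b³`. On these matrices
`g ↦ b / a` is a homomorphism onto `kˣ`, split by `t ↦ diag(1, t, t³)`, and `b = a` forces
`c = a`, so its kernel is the group of scalars.
-/

open MvPolynomial Matrix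

namespace Matrix.IsDiag

variable {n R : Type*} [Fintype n] [DecidableEq n]

lemma mul_apply_self [NonUnitalNonAssocSemiring R] {A : Matrix n n R} (hA : A.IsDiag)
    (B : Matrix n n R) (i : n) : (A * B) i i = A i i * B i i := by
  conv_lhs => rw [← hA.diagonal_diag]
  rw [diagonal_mul, diag_apply]

lemma apply_self_ne_zero [CommRing R] [IsDomain R] {A : Matrix n n R} (hA : A.IsDiag)
    (hdet : A.det ≠ 0) (i : n) : A i i ≠ 0 := by
  rw [← hA.diagonal_diag, det_diagonal] at hdet
  exact Finset.prod_ne_zero_iff.mp hdet i (Finset.mem_univ i)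

end Matrix.IsDiag

/-- `cuspPolar u v w = ∂ᵤ∂ᵥ∂_w (X₀²X₂ + X₁³)`. -/
def cuspPolar {R : Type*} [CommSemiring R] (u v w : Fin 3 → R) : R :=
  2 * (u 0 * v 0 * w 2 + u 0 * w 0 * v 2 + v 0 * w 0 * u 2) + 6 * (u 1 * v 1 * w 1)

lemma MvPolynomial.pderiv_sum_C_mul_X {σ R : Type*} [Fintype σ] [CommSemiring R]
    (m : σ → R) (p : σ) : pderiv p (∑ j, C (m j) * X j) = C (m p) := by
  classical
  simp [map_sum, Pi.single_apply]

lemma pderiv_pderiv_pderiv_cusp {σ R : Type*} [CommSemiring R]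
    (l : Fin 3 → MvPolynomial σ R) (M : Matrix (Fin 3) σ R)
    (hl : ∀ i p, pderiv p (l i) = C (M i p)) (p q r : σ) :
    pderiv p (pderiv q (pderiv r (l 0 ^ 2 * l 2 + l 1 ^ 3))) =
      C (cuspPolar (Mᵀ p) (Mᵀ q) (Mᵀ r)) := by
  simp only [map_add, pderiv_mul, pderiv_pow, hl, pderiv_C, Derivation.map_natCast]
  simp only [cuspPolar, transpose_apply, C_add, C_mul, map_ofNat, map_zero]
  ring

lemma MvPolynomial.pderiv_X_eq_C_one_apply {σ R : Type*} [DecidableEq σ] [CommSemiring R]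
    (i p : σ) : pderiv p (X i : MvPolynomial σ R) = C ((1 : Matrix σ σ R) i p) := by
  by_cases h : i = p
  · subst h; simp
  · simp [h, one_apply_ne h]

lemma cuspPolar_transpose_eq_of_aeval_eq {R : Type*} [CommSemiring R]
    (M : Matrix (Fin 3) (Fin 3) R) (c : R)
    (hc : aeval (fun i => ∑ j, C (M i j) * X j)
        (X 0 ^ 2 * X 2 + X 1 ^ 3 : MvPolynomial (Fin 3) R)
      = c • (X 0 ^ 2 * X 2 + X 1 ^ 3 : MvPolynomial (Fin 3) R)) (p q r : Fin 3) :
    cuspPolar (Mᵀ p) (Mᵀ q) (Mᵀ r) =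
      c * cuspPolar ((1 : Matrix (Fin 3) (Fin 3) R) p) ((1 : Matrix (Fin 3) (Fin 3) R) q)
        ((1 : Matrix (Fin 3) (Fin 3) R) r) := by
  simp only [map_add, map_mul, map_pow, aeval_X, smul_eq_C_mul] at hc
  have h := congrArg (fun P => pderiv p (pderiv q (pderiv r P))) hc
  simp only [pderiv_C_mul] at h
  rw [pderiv_pderiv_pderiv_cusp _ M (fun i => pderiv_sum_C_mul_X (M i)),
    pderiv_pderiv_pderiv_cusp X 1 pderiv_X_eq_C_one_apply, transpose_one, ← C_mul] at h
  exact C_injective _ _ h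

section Field

variable {k : Type*} [Field k] {M : Matrix (Fin 3) (Fin 3) k} {c : k}

lemma last_col_eq_zero_of_cuspPolar_eq (h6 : (6 : k) ≠ 0) (hM : M.det ≠ 0)
    (h : ∀ p q r, cuspPolar (Mᵀ p) (Mᵀ q) (Mᵀ r) =
      c * cuspPolar ((1 : Matrix (Fin 3) (Fin 3) k) p) ((1 : Matrix (Fin 3) (Fin 3) k) q)
        ((1 : Matrix (Fin 3) (Fin 3) k) r)) :
    M 0 2 = 0 ∧ M 1 2 = 0 := by
  -- coefficients of the linear form `w ↦ cuspPolar (Mᵀ 2) (Mᵀ 2) w`, zero on every column of `M`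
  have hv : ![4 * M 0 2 * M 2 2, 6 * M 1 2 ^ 2, 2 * M 0 2 ^ 2] ᵥ* M = 0 := by
    ext r
    have hr := h 2 2 r
    simp only [cuspPolar, transpose_apply, one_apply, Fin.reduceEq, ↓reduceIte, vecMul, dotProduct,
      Fin.sum_univ_three, cons_val_zero, cons_val_one, cons_val_two, tail_cons, head_cons,
      Pi.zero_apply] at hr ⊢
    linear_combination hr
  have hv0 := eq_zero_of_vecMul_eq_zero hM hv
  have h2 : (2 : k) ≠ 0 := fun h2 => h6 (by linear_combination 3 * h2)
  constructor
  · simpa [h2] using congrFun hv0 2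
  · simpa [h6] using congrFun hv0 1

lemma isDiag_of_cuspPolar_eq (h6 : (6 : k) ≠ 0) (hM : M.det ≠ 0)
    (h : ∀ p q r, cuspPolar (Mᵀ p) (Mᵀ q) (Mᵀ r) =
      c * cuspPolar ((1 : Matrix (Fin 3) (Fin 3) k) p) ((1 : Matrix (Fin 3) (Fin 3) k) q)
        ((1 : Matrix (Fin 3) (Fin 3) k) r)) :
    M.IsDiag ∧ M 0 0 ^ 2 * M 2 2 = M 1 1 ^ 3 := by
  obtain ⟨h02, h12⟩ := last_col_eq_zero_of_cuspPolar_eq h6 hM h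
  have h2 : (2 : k) ≠ 0 := fun h2 => h6 (by linear_combination 3 * h2)
  have hdet : M.det = (M 0 0 * M 1 1 - M 0 1 * M 1 0) * M 2 2 := by
    rw [det_fin_three, h02, h12]; ring
  have h22 : M 2 2 ≠ 0 := fun h0 => hM (by rw [hdet, h0, mul_zero])
  have e112 := h 1 1 2
  have e002 := h 0 0 2
  have e111 := h 1 1 1
  have e011 := h 0 1 1
  have e000 := h 0 0 0
  have e001 := h 0 0 1
  simp only [cuspPolar, transpose_apply, one_apply, Fin.reduceEq, one_ne_zero, zero_ne_one,
    ↓reduceIte, h02, h12] at e112 e002 e111 e011 e000 e001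
  have h01 : M 0 1 = 0 := pow_eq_zero_iff two_ne_zero |>.mp <|
    mul_left_cancel₀ (mul_ne_zero h2 h22) (by linear_combination e112)
  rw [h01] at e111 e011 e001
  have hdiag : M 0 0 * M 1 1 ≠ 0 := fun h0 => hM (by rw [hdet, h01, h0]; ring)
  have h00 : M 0 0 ≠ 0 := left_ne_zero_of_mul hdiag
  have h11 : M 1 1 ≠ 0 := right_ne_zero_of_mul hdiag
  have hc0 : M 0 0 ^ 2 * M 2 2 = c := mul_left_cancel₀ h2 (by linear_combination e002)
  have hc1 : M 1 1 ^ 3 = c := mul_left_cancel₀ h6 (by linear_combination e111)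
  have h10 : M 1 0 = 0 :=
    mul_left_cancel₀ (mul_ne_zero h6 (pow_ne_zero 2 h11)) (by linear_combination e011)
  rw [h10] at e000 e001
  have h20 : M 2 0 = 0 :=
    mul_left_cancel₀ (mul_ne_zero h6 (pow_ne_zero 2 h00)) (by linear_combination e000)
  have h21 : M 2 1 = 0 :=
    mul_left_cancel₀ (mul_ne_zero h2 (pow_ne_zero 2 h00)) (by linear_combination e001)
  refine ⟨fun i j hij => ?_, hc0.trans hc1.symm⟩
  fin_cases i <;> fin_cases j <;> first | exact absurd rfl hij | assumption

end Field

lemma aeval_cusp_of_isDiag {R : Type*} [CommRing R] {M : Matrix (Fin 3) (Fin 3) R}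
    (hM : M.IsDiag) (h : M 0 0 ^ 2 * M 2 2 = M 1 1 ^ 3) :
    aeval (fun i => ∑ j, C (M i j) * X j) (X 0 ^ 2 * X 2 + X 1 ^ 3 : MvPolynomial (Fin 3) R)
      = (M 0 0 ^ 2 * M 2 2) • (X 0 ^ 2 * X 2 + X 1 ^ 3 : MvPolynomial (Fin 3) R) := by
  have hl : ∀ i, ∑ j, C (M i j) * X j = (C (M i i) * X i : MvPolynomial (Fin 3) R) := fun i =>
    Finset.sum_eq_single i (fun j _ hji => by rw [hM hji.symm, C_0, zero_mul])
      (fun hi => absurd (Finset.mem_univ i) hi)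
  have hC : (C (M 1 1) : MvPolynomial (Fin 3) R) ^ 3 = C (M 0 0) ^ 2 * C (M 2 2) := by
    rw [← map_pow, ← map_pow, ← map_mul, h]
  simp only [map_add, map_mul, map_pow, aeval_X, hl, smul_eq_C_mul]
  linear_combination (X 1 : MvPolynomial (Fin 3) R) ^ 3 * hC

lemma exists_aeval_cusp_eq_smul_iff {k : Type*} [Field k] (h6 : (6 : k) ≠ 0)
    (g : GL (Fin 3) k) :
    (∃ c : kˣ, aeval (fun i => ∑ j, C ((g : Matrix (Fin 3) (Fin 3) k) i j) * X j)
        (X 0 ^ 2 * X 2 + X 1 ^ 3 : MvPolynomial (Fin 3) k)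
      = (c : k) • (X 0 ^ 2 * X 2 + X 1 ^ 3 : MvPolynomial (Fin 3) k)) ↔
      (g : Matrix (Fin 3) (Fin 3) k).IsDiag ∧
        (g : Matrix (Fin 3) (Fin 3) k) 0 0 ^ 2 * (g : Matrix (Fin 3) (Fin 3) k) 2 2 =
          (g : Matrix (Fin 3) (Fin 3) k) 1 1 ^ 3 := by
  constructor
  · rintro ⟨c, hc⟩
    exact isDiag_of_cuspPolar_eq h6 g.det_ne_zero (cuspPolar_transpose_eq_of_aeval_eq _ _ hc)
  · rintro ⟨hg, hrel⟩
    have hne := hg.apply_self_ne_zero g.det_ne_zero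
    exact ⟨Units.mk0 _ (mul_ne_zero (pow_ne_zero 2 (hne 0)) (hne 2)),
      aeval_cusp_of_isDiag hg hrel⟩

section DiagRatio

variable {n k : Type*} [Fintype n] [DecidableEq n] [Field k] (S : Subgroup (GL n k))
  (hS : ∀ g ∈ S, (g : Matrix n n k).IsDiag) (i j : n)

def diagRatioHom : S →* kˣ :=
  MonoidHom.mk'
    (fun g => Units.mk0 (((g : GL n k) : Matrix n n k) i i / ((g : GL n k) : Matrix n n k) j j)
      (div_ne_zero ((hS g g.2).apply_self_ne_zero (GeneralLinearGroup.det_ne_zero _) i)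
        ((hS g g.2).apply_self_ne_zero (GeneralLinearGroup.det_ne_zero _) j)))
    (fun g h => by
      ext
      simp only [Subgroup.coe_mul, Units.val_mul, (hS g g.2).mul_apply_self, Units.val_mk0]
      ring)

@[simp]
lemma val_diagRatioHom_apply (g : S) :
    (diagRatioHom S hS i j g : k) =
      ((g : GL n k) : Matrix n n k) i i / ((g : GL n k) : Matrix n n k) j j :=
  rfl

end DiagRatio

lemma exists_eq_smul_one_iff_of_isDiag {k : Type*} [Field k] {M : Matrix (Fin 3) (Fin 3) k}
    (hM : M.IsDiag) (h : M 0 0 ^ 2 * M 2 2 = M 1 1 ^ 3) (h0 : M 0 0 ≠ 0) :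
    (∃ u : kˣ, M = (u : k) • (1 : Matrix (Fin 3) (Fin 3) k)) ↔ M 1 1 = M 0 0 := by
  constructor
  · rintro ⟨u, rfl⟩
    simp
  · intro h11
    have h22 : M 2 2 = M 0 0 := mul_left_cancel₀ (pow_ne_zero 2 h0) (by rw [h, h11]; ring)
    refine ⟨Units.mk0 _ h0, ?_⟩
    conv_lhs => rw [← hM.diagonal_diag]
    ext i j
    fin_cases i <;> fin_cases j <;> simp [h11, h22]

section CuspStabilizer

variable {k : Type*} [Field k] {S : Subgroup (GL (Fin 3) k)}
  (hS : ∀ g : GL (Fin 3) k, g ∈ S ↔ (g : Matrix (Fin 3) (Fin 3) k).IsDiag ∧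
    (g : Matrix (Fin 3) (Fin 3) k) 0 0 ^ 2 * (g : Matrix (Fin 3) (Fin 3) k) 2 2 =
      (g : Matrix (Fin 3) (Fin 3) k) 1 1 ^ 3)

lemma ker_diagRatioHom_of_cusp {Z : Subgroup (GL (Fin 3) k)}
    (hZ : ∀ g : GL (Fin 3) k, g ∈ Z ↔ ∃ c : kˣ,
      (g : Matrix (Fin 3) (Fin 3) k) = (c : k) • (1 : Matrix (Fin 3) (Fin 3) k)) :
    (diagRatioHom S (fun g hg => ((hS g).1 hg).1) 1 0).ker = Z.subgroupOf S := by
  ext g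
  obtain ⟨hg, hrel⟩ := (hS g).1 g.2
  have h00 := hg.apply_self_ne_zero (GeneralLinearGroup.det_ne_zero _) 0
  rw [MonoidHom.mem_ker, Subgroup.mem_subgroupOf, hZ, Units.ext_iff, val_diagRatioHom_apply,
    Units.val_one, div_eq_one_iff_eq h00, exists_eq_smul_one_iff_of_isDiag hg hrel h00]

lemma diagRatioHom_surjective_of_cusp :
    Function.Surjective (diagRatioHom S (fun g hg => ((hS g).1 hg).1) 1 0) := by
  intro t
  let g := GeneralLinearGroup.mkOfDetNeZero (diagonal ![1, (t : k), (t : k) ^ 3])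
    (by simp [det_diagonal, Fin.prod_univ_three])
  refine ⟨⟨g, (hS g).2 ⟨isDiag_diagonal _, by simp [g]⟩⟩, Units.ext (by simp [g])⟩

end CuspStabilizer

/-- Over a field `k` with `6` invertible, the stabilizer up to scalar `S` of the cuspidal
cubic `X₀²X₂ + X₁³` under the substitution action of `GL₃(k)` consists exactly of the
invertible diagonal matrices `diag(a,b,c)` with `a²c = b³`, and the quotient of `S` by
the subgroup `Z` of scalar matrices is isomorphic to `kˣ`. -/
theorem stmt11 (k : Type*) [Field k] (h6 : IsUnit (6 : k))
    (S : Subgroup (GL (Fin 3) k))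
    (hS : ∀ g : GL (Fin 3) k, g ∈ S ↔ ∃ c : kˣ,
        aeval (fun i => ∑ j : Fin 3, C ((g : Matrix (Fin 3) (Fin 3) k) i j) * X j)
            (X 0 ^ 2 * X 2 + X 1 ^ 3 : MvPolynomial (Fin 3) k)
          = (c : k) • (X 0 ^ 2 * X 2 + X 1 ^ 3 : MvPolynomial (Fin 3) k))
    (Z : Subgroup (GL (Fin 3) k))
    (hZ : ∀ g : GL (Fin 3) k, g ∈ Z ↔ ∃ c : kˣ,
        (g : Matrix (Fin 3) (Fin 3) k) = (c : k) • (1 : Matrix (Fin 3) (Fin 3) k))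
    [(Z.subgroupOf S).Normal] :
    (∀ g : GL (Fin 3) k, g ∈ S ↔
        ((∀ i j, i ≠ j → (g : Matrix (Fin 3) (Fin 3) k) i j = 0) ∧
          ((g : Matrix (Fin 3) (Fin 3) k) 0 0) ^ 2 * ((g : Matrix (Fin 3) (Fin 3) k) 2 2)
            = ((g : Matrix (Fin 3) (Fin 3) k) 1 1) ^ 3)) ∧
    Nonempty ((S ⧸ Z.subgroupOf S) ≃* kˣ) := by
  have hS' g := (hS g).trans (exists_aeval_cusp_eq_smul_iff h6.ne_zero g)
  refine ⟨hS', ⟨?_⟩⟩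
  exact (QuotientGroup.quotientMulEquivOfEq (ker_diagRatioHom_of_cusp hS' hZ).symm).trans
    (QuotientGroup.quotientKerEquivOfSurjective _ (diagRatioHom_surjective_of_cusp hS'))
end

section
/- Let k be a field in which 6 is invertible and let f = X₀X₁X₂ + X₀³ + X₁³ ∈ k[X₀,X₁,X₂] (the nodal cubic). Then the projective stabilizer S_f/Z is isomorphic to the semidirect product μ₃(k) ⋊ C₂, where μ₃(k) = {ζ ∈ kˣ : ζ³ = 1} is the group of cube roots of unity in k, C₂ is the cyclic group of order 2, and the nontrivial element of C₂ acts on μ₃(k) by inversion. -/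
/-!
The cubic `f = X₀X₁X₂ + X₀³ + X₁³` has a single singular point, `(0 : 0 : 1)`, which every `g`
with `f(gX) = c f(X)` must fix; the tangent cone there is `X₀X₁`, so `g` either fixes or swaps the
two branches `X₀ = 0` and `X₁ = 0`. Comparing the remaining coefficients forces `g` to be a scalar
multiple of `diag(ζ, ζ⁻¹, 1)` or of `diag(ζ, ζ⁻¹, 1)` followed by the swap of `X₀` and `X₁`, with
`ζ³ = 1`. These matrices form a copy of `μ₃ ⋊ C₂` meeting the scalars trivially.
-/

open MvPolynomial

/-- The action of the cyclic group of order two (realised as `ℤˣ`) on a commutative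
group by inversion: the nontrivial element acts as `x ↦ x⁻¹`. -/
def invAction (N : Type*) [CommGroup N] : ℤˣ →* MulAut N where
  toFun u :=
    { toFun := fun x => x ^ (u : ℤ)
      invFun := fun x => x ^ (u : ℤ)
      left_inv := fun x => by
        show (x ^ (u : ℤ)) ^ (u : ℤ) = x
        rw [← zpow_mul, ← Units.val_mul, Int.units_mul_self, Units.val_one, zpow_one]
      right_inv := fun x => by
        show (x ^ (u : ℤ)) ^ (u : ℤ) = x
        rw [← zpow_mul, ← Units.val_mul, Int.units_mul_self, Units.val_one, zpow_one]
      map_mul' := fun x y => mul_zpow x y _ }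
  map_one' := by ext x; simp
  map_mul' := fun u v => by
    ext x
    simp [← zpow_mul, mul_comm]

noncomputable section

namespace NodalCubic

open Matrix SemidirectProduct

variable {k : Type*} [Field k]

variable (k) in
abbrev nodalCubic : MvPolynomial (Fin 3) k := X 0 * X 1 * X 2 + X 0 ^ 3 + X 1 ^ 3

def linearSubst (m : Matrix (Fin 3) (Fin 3) k) (i : Fin 3) : MvPolynomial (Fin 3) k :=
  ∑ j, C (m i j) * X j

def ScalesNodalCubic (m : Matrix (Fin 3) (Fin 3) k) : Prop :=
  ∃ c : kˣ, aeval (linearSubst m) (nodalCubic k) = (c : k) • nodalCubic k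

/-- The substitution `X i ↦ t ^ 5 ^ i` sends the ten cubic monomials to distinct powers of `t`. -/
lemma cubic_coeffs_eq_zero {q000 q111 q222 q001 q002 q011 q112 q022 q122 q012 : k}
    (h : C q000 * X 0 ^ 3 + C q111 * X 1 ^ 3 + C q222 * X 2 ^ 3
      + C q001 * (X 0 ^ 2 * X 1) + C q002 * (X 0 ^ 2 * X 2)
      + C q011 * (X 0 * X 1 ^ 2) + C q112 * (X 1 ^ 2 * X 2)
      + C q022 * (X 0 * X 2 ^ 2) + C q122 * (X 1 * X 2 ^ 2)
      + C q012 * (X 0 * X 1 * X 2) = (0 : MvPolynomial (Fin 3) k)) :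
    q000 = 0 ∧ q111 = 0 ∧ q222 = 0 ∧ q001 = 0 ∧ q002 = 0 ∧ q011 = 0 ∧ q112 = 0 ∧ q022 = 0
      ∧ q122 = 0 ∧ q012 = 0 := by
  have h' := congrArg (aeval fun i : Fin 3 => (Polynomial.X : Polynomial k) ^ 5 ^ (i : ℕ)) h
  simp only [map_add, map_mul, map_pow, aeval_X, aeval_C, map_zero,
    Polynomial.algebraMap_eq] at h'
  norm_num [← pow_mul, ← pow_add, ← pow_succ'] at h'
  have coeff (n : ℕ) := congrArg (Polynomial.coeff · n) h'
  simp only [Polynomial.coeff_add, Polynomial.coeff_C_mul_X_pow, Polynomial.coeff_zero] at coeff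
  exact ⟨by simpa using coeff 3, by simpa using coeff 15, by simpa using coeff 75,
    by simpa using coeff 7, by simpa using coeff 27, by simpa using coeff 11,
    by simpa using coeff 35, by simpa using coeff 51, by simpa using coeff 55,
    by simpa using coeff 31⟩

/-- The coefficients of `f(mX) - c • f` at the monomials of `cubic_coeffs_eq_zero`, in order. -/
lemma nodalCubic_coeff_eqns {m : Matrix (Fin 3) (Fin 3) k} {c : k}
    (h : aeval (linearSubst m) (nodalCubic k) = c • nodalCubic k) :
    m 0 0 * m 1 0 * m 2 0 + m 0 0 ^ 3 + m 1 0 ^ 3 - c = 0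
    ∧ m 0 1 * m 1 1 * m 2 1 + m 0 1 ^ 3 + m 1 1 ^ 3 - c = 0
    ∧ m 0 2 * m 1 2 * m 2 2 + m 0 2 ^ 3 + m 1 2 ^ 3 = 0
    ∧ m 0 0 * m 1 0 * m 2 1 + m 0 0 * m 1 1 * m 2 0 + m 0 1 * m 1 0 * m 2 0
        + 3 * m 0 0 ^ 2 * m 0 1 + 3 * m 1 0 ^ 2 * m 1 1 = 0
    ∧ m 0 0 * m 1 0 * m 2 2 + m 0 0 * m 1 2 * m 2 0 + m 0 2 * m 1 0 * m 2 0
        + 3 * m 0 0 ^ 2 * m 0 2 + 3 * m 1 0 ^ 2 * m 1 2 = 0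
    ∧ m 0 1 * m 1 1 * m 2 0 + m 0 1 * m 1 0 * m 2 1 + m 0 0 * m 1 1 * m 2 1
        + 3 * m 0 1 ^ 2 * m 0 0 + 3 * m 1 1 ^ 2 * m 1 0 = 0
    ∧ m 0 1 * m 1 1 * m 2 2 + m 0 1 * m 1 2 * m 2 1 + m 0 2 * m 1 1 * m 2 1
        + 3 * m 0 1 ^ 2 * m 0 2 + 3 * m 1 1 ^ 2 * m 1 2 = 0
    ∧ m 0 2 * m 1 2 * m 2 0 + m 0 2 * m 1 0 * m 2 2 + m 0 0 * m 1 2 * m 2 2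
        + 3 * m 0 2 ^ 2 * m 0 0 + 3 * m 1 2 ^ 2 * m 1 0 = 0
    ∧ m 0 2 * m 1 2 * m 2 1 + m 0 2 * m 1 1 * m 2 2 + m 0 1 * m 1 2 * m 2 2
        + 3 * m 0 2 ^ 2 * m 0 1 + 3 * m 1 2 ^ 2 * m 1 1 = 0
    ∧ m 0 0 * m 1 1 * m 2 2 + m 0 0 * m 1 2 * m 2 1 + m 0 1 * m 1 0 * m 2 2
        + m 0 1 * m 1 2 * m 2 0 + m 0 2 * m 1 0 * m 2 1 + m 0 2 * m 1 1 * m 2 0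
        + 6 * m 0 0 * m 0 1 * m 0 2 + 6 * m 1 0 * m 1 1 * m 1 2 - c = 0 := by
  simp only [linearSubst, map_add, map_mul, map_pow, aeval_X, Fin.sum_univ_three,
    smul_eq_C_mul] at h
  refine cubic_coeffs_eq_zero ?_
  simp only [map_add, map_sub, map_mul, map_pow, map_ofNat]
  linear_combination h

def involutionHom {G : Type*} [Group G] (w : G) (hw : w * w = 1) : ℤˣ →* G where
  toFun u := if u = 1 then 1 else w
  map_one' := if_pos rfl
  map_mul' u v := by
    rcases Int.units_eq_one_or u with rfl | rfl <;> rcases Int.units_eq_one_or v with rfl | rfl <;>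
      simp [hw]

/-- `diag(t, t⁻¹, 1)` rather than `diag(1, t, t²)`: conjugation by the swap of `X₀` and `X₁` then
inverts it on the nose, not only up to a scalar. -/
def diagInv : kˣ →* GL (Fin 3) k where
  toFun t := ⟨diagonal ![↑t, ↑t⁻¹, 1], diagonal ![↑t⁻¹, ↑t, 1],
    by rw [diagonal_mul_diagonal, ← diagonal_one]; congr 1; ext i; fin_cases i <;> simp,
    by rw [diagonal_mul_diagonal, ← diagonal_one]; congr 1; ext i; fin_cases i <;> simp⟩
  map_one' := by ext i j; fin_cases i <;> fin_cases j <;> simp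
  map_mul' s t := by
    ext i j; fin_cases i <;> fin_cases j <;> simp [mul_comm]

def swap01 : GL (Fin 3) k :=
  ⟨!![0, 1, 0; 1, 0, 0; 0, 0, 1], !![0, 1, 0; 1, 0, 0; 0, 0, 1],
    by simp [one_fin_three], by simp [one_fin_three]⟩

lemma swap01_mul_self : (swap01 * swap01 : GL (Fin 3) k) = 1 :=
  Units.ext <| by simp [swap01, one_fin_three]

lemma swap01_mul_diagInv_mul_swap01 (t : kˣ) :
    (swap01 * diagInv t * swap01 : GL (Fin 3) k) = diagInv t⁻¹ := by
  ext i j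
  fin_cases i <;> fin_cases j <;>
    simp [swap01, diagInv, mul_apply, vecMul, dotProduct, Fin.sum_univ_three]

variable (k) in
def monomialHom (n : ℕ) :
    rootsOfUnity n k ⋊[invAction (rootsOfUnity n k)] ℤˣ →* GL (Fin 3) k :=
  lift (diagInv.comp (rootsOfUnity n k).subtype) (involutionHom swap01 swap01_mul_self) <| by
    intro u
    ext ζ : 1
    rcases Int.units_eq_one_or u with rfl | rfl
    · simp
    · simp [involutionHom, invAction, ← swap01_mul_diagInv_mul_swap01,
        inv_eq_of_mul_eq_one_right swap01_mul_self]

lemma coe_monomialHom_one {n : ℕ} (ζ : rootsOfUnity n k) :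
    (monomialHom k n ⟨ζ, 1⟩ : Matrix (Fin 3) (Fin 3) k)
      = !![((ζ : kˣ) : k), 0, 0; 0, ((ζ : kˣ) : k)⁻¹, 0; 0, 0, 1] := by
  ext i j; fin_cases i <;> fin_cases j <;> simp [monomialHom, lift, involutionHom, diagInv]

lemma coe_monomialHom_neg_one {n : ℕ} (ζ : rootsOfUnity n k) :
    (monomialHom k n ⟨ζ, -1⟩ : Matrix (Fin 3) (Fin 3) k)
      = !![0, ((ζ : kˣ) : k), 0; ((ζ : kˣ) : k)⁻¹, 0, 0; 0, 0, 1] := by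
  ext i j; fin_cases i <;> fin_cases j <;>
    simp [monomialHom, lift, involutionHom, diagInv, swap01, mul_apply, Fin.sum_univ_three]

lemma eq_one_of_coe_monomialHom_eq_smul_one {n : ℕ}
    {x : rootsOfUnity n k ⋊[invAction (rootsOfUnity n k)] ℤˣ} {c : k}
    (h : (monomialHom k n x : Matrix (Fin 3) (Fin 3) k) = c • 1) : x = 1 := by
  obtain ⟨ζ, u⟩ := x
  rcases Int.units_eq_one_or u with rfl | rfl
  · rw [coe_monomialHom_one] at h
    have h00 : ((ζ : kˣ) : k) = c := by simpa using congrFun₂ h 0 0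
    have h22 : (1 : k) = c := by simpa using congrFun₂ h 2 2
    ext <;> simp [h00, ← h22]
  · rw [coe_monomialHom_neg_one] at h
    have h00 : (0 : k) = c := by simpa using congrFun₂ h 0 0
    have h22 : (1 : k) = c := by simpa using congrFun₂ h 2 2
    exact absurd (h00.trans h22.symm) zero_ne_one

lemma scalesNodalCubic_monomialHom (x : rootsOfUnity 3 k ⋊[invAction (rootsOfUnity 3 k)] ℤˣ) :
    ScalesNodalCubic (monomialHom k 3 x : Matrix (Fin 3) (Fin 3) k) := by
  obtain ⟨ζ, u⟩ := x
  have hζ : ((ζ : kˣ) : k) ^ 3 = 1 := by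
    rw [← Units.val_pow_eq_pow_val, (mem_rootsOfUnity 3 _).1 ζ.2, Units.val_one]
  have hζ0 : ((ζ : kˣ) : k) ≠ 0 := Units.ne_zero _
  have hC : C ((ζ : kˣ) : k) * C ((ζ : kˣ) : k)⁻¹ = (1 : MvPolynomial (Fin 3) k) := by
    rw [← map_mul, mul_inv_cancel₀ hζ0, map_one]
  have hC3 : C ((ζ : kˣ) : k) ^ 3 = (1 : MvPolynomial (Fin 3) k) := by rw [← map_pow, hζ, map_one]
  have hC3' : C ((ζ : kˣ) : k)⁻¹ ^ 3 = (1 : MvPolynomial (Fin 3) k) := by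
    rw [← map_pow, inv_pow, hζ, inv_one, map_one]
  refine ⟨1, ?_⟩
  rcases Int.units_eq_one_or u with rfl | rfl <;>
    simp only [coe_monomialHom_one, coe_monomialHom_neg_one, nodalCubic, linearSubst,
      Fin.sum_univ_three, map_add, map_mul, map_pow, aeval_X, of_apply, cons_val',
      cons_val_fin_one, cons_val_zero, cons_val_one, cons_val, C_0, C_1, zero_mul, one_mul,
      add_zero, zero_add, Units.val_one, one_smul]
  · linear_combination (X 0 * X 1 * X 2) * hC + X 0 ^ 3 * hC3 + X 1 ^ 3 * hC3'
  · linear_combination (X 0 * X 1 * X 2) * hC + X 1 ^ 3 * hC3 + X 0 ^ 3 * hC3'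

lemma eq_zero_of_grad_nodalCubic_eq_zero (h3 : (3 : k) ≠ 0) {x₀ x₁ x₂ : k}
    (h₀ : x₁ * x₂ + 3 * x₀ ^ 2 = 0) (h₁ : x₀ * x₂ + 3 * x₁ ^ 2 = 0) (h₂ : x₀ * x₁ = 0) :
    x₀ = 0 ∧ x₁ = 0 := by
  rcases mul_eq_zero.1 h₂ with h | h <;> subst h <;> simp_all

/-- The coefficients of `X₀X₂²`, `X₁X₂²` and `X₂³` say that `mᵀ` kills the gradient of `f` at
`m e₂`, so `m e₂` is a singular point of `f`. -/
lemma fixes_singular_point (h3 : (3 : k) ≠ 0) {m : Matrix (Fin 3) (Fin 3) k} {c : k} (hm : IsUnit m)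
    (h : aeval (linearSubst m) (nodalCubic k) = c • nodalCubic k) : m 0 2 = 0 ∧ m 1 2 = 0 := by
  obtain ⟨-, -, h222, -, -, -, -, h022, h122, -⟩ := nodalCubic_coeff_eqns h
  have hgrad : ![m 1 2 * m 2 2 + 3 * m 0 2 ^ 2, m 0 2 * m 2 2 + 3 * m 1 2 ^ 2, m 0 2 * m 1 2]
      = 0 := by
    refine vecMul_injective_of_isUnit hm ?_
    ext j
    fin_cases j <;>
      simp only [vecMul, dotProduct, Fin.sum_univ_three, Fin.isValue, cons_val_zero, cons_val_one,
        cons_val, Fin.zero_eta, Fin.mk_one, Fin.reduceFinMk, Pi.zero_apply, zero_mul,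
        Finset.sum_const_zero]
    · linear_combination h022
    · linear_combination h122
    · linear_combination 3 * h222
  exact eq_zero_of_grad_nodalCubic_eq_zero h3 (congrFun hgrad 0) (congrFun hgrad 1)
    (congrFun hgrad 2)

lemma div_pow_three_eq_one_and_eq_mul_div {a d h : k} (ha : a ≠ 0) (hd : d ≠ 0) (hh : h ≠ 0)
    (hA : a ^ 3 = a * d * h) (hD : d ^ 3 = a * d * h) : (a / h) ^ 3 = 1 ∧ d = h * (h / a) := by
  have ha2 : a ^ 2 = d * h := mul_left_cancel₀ ha (by linear_combination hA)
  have hd2 : d ^ 2 = a * h := mul_left_cancel₀ hd (by linear_combination hD)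
  have had : a * d = h ^ 2 :=
    mul_left_cancel₀ (mul_ne_zero ha hd) (by linear_combination d ^ 2 * ha2 + d * h * hd2)
  constructor
  · rw [div_pow, div_eq_one_iff_eq (pow_ne_zero 3 hh)]
    linear_combination hA + h * had
  · field_simp
    linear_combination had

lemma exists_eq_smul_monomialHom_of_apply_one_zero {m : Matrix (Fin 3) (Fin 3) k} {c : k}
    (hm : m.det ≠ 0) (h : aeval (linearSubst m) (nodalCubic k) = c • nodalCubic k)
    (h02 : m 0 2 = 0) (h12 : m 1 2 = 0) (h10 : m 1 0 = 0) :
    ∃ (a : kˣ) (ζ : rootsOfUnity 3 k),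
      m = (a : k) • (monomialHom k 3 ⟨ζ, 1⟩ : Matrix (Fin 3) (Fin 3) k) := by
  obtain ⟨h000, h111, -, h001, -, h011, h112, -, -, h012⟩ := nodalCubic_coeff_eqns h
  obtain ⟨⟨h00, h11⟩, h22⟩ : (m 0 0 ≠ 0 ∧ m 1 1 ≠ 0) ∧ m 2 2 ≠ 0 := by
    simpa [det_fin_three, h02, h12, h10] using hm
  have h01 : m 0 1 = 0 := by simpa [h02, h12, h11, h22] using h112
  have h20 : m 2 0 = 0 := by simpa [h01, h10, h00, h11] using h001
  have h21 : m 2 1 = 0 := by simpa [h01, h10, h00, h11] using h011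
  simp only [h01, h02, h10, h12] at h000 h111 h012
  obtain ⟨hζ, hd⟩ := div_pow_three_eq_one_and_eq_mul_div h00 h11 h22
    (by linear_combination h000 - h012) (by linear_combination h111 - h012)
  refine ⟨Units.mk0 _ h22, rootsOfUnity.mkOfPowEq _ hζ, ?_⟩
  rw [coe_monomialHom_one]
  ext i j
  fin_cases i <;> fin_cases j <;> simp [h01, h02, h10, h12, h20, h21, hd, mul_div_cancel₀ _ h22]

lemma exists_eq_smul_monomialHom_of_apply_zero_zero {m : Matrix (Fin 3) (Fin 3) k} {c : k}
    (hm : m.det ≠ 0) (h : aeval (linearSubst m) (nodalCubic k) = c • nodalCubic k)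
    (h02 : m 0 2 = 0) (h12 : m 1 2 = 0) (h00 : m 0 0 = 0) :
    ∃ (a : kˣ) (ζ : rootsOfUnity 3 k),
      m = (a : k) • (monomialHom k 3 ⟨ζ, -1⟩ : Matrix (Fin 3) (Fin 3) k) := by
  obtain ⟨h000, h111, -, h001, -, h011, h112, -, -, h012⟩ := nodalCubic_coeff_eqns h
  obtain ⟨⟨h01, h10⟩, h22⟩ : (m 0 1 ≠ 0 ∧ m 1 0 ≠ 0) ∧ m 2 2 ≠ 0 := by
    simpa [det_fin_three, h02, h12, h00] using hm
  have h11 : m 1 1 = 0 := by simpa [h02, h12, h01, h22] using h112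
  have h20 : m 2 0 = 0 := by simpa [h01, h10, h00, h11] using h001
  have h21 : m 2 1 = 0 := by simpa [h01, h10, h00, h11] using h011
  simp only [h00, h02, h11, h12] at h000 h111 h012
  obtain ⟨hζ, hd⟩ := div_pow_three_eq_one_and_eq_mul_div h01 h10 h22
    (by linear_combination h111 - h012) (by linear_combination h000 - h012)
  refine ⟨Units.mk0 _ h22, rootsOfUnity.mkOfPowEq _ hζ, ?_⟩
  rw [coe_monomialHom_neg_one]
  ext i j
  fin_cases i <;> fin_cases j <;> simp [h00, h02, h11, h12, h20, h21, hd, mul_div_cancel₀ _ h22]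

lemma exists_eq_smul_monomialHom (h3 : (3 : k) ≠ 0) {m : Matrix (Fin 3) (Fin 3) k}
    (hm : IsUnit m) (hs : ScalesNodalCubic m) :
    ∃ (a : kˣ) (x : rootsOfUnity 3 k ⋊[invAction (rootsOfUnity 3 k)] ℤˣ),
      m = (a : k) • (monomialHom k 3 x : Matrix (Fin 3) (Fin 3) k) := by
  obtain ⟨c, h⟩ := hs
  obtain ⟨h02, h12⟩ := fixes_singular_point h3 hm h
  have hdet : m.det ≠ 0 := ((isUnit_iff_isUnit_det m).1 hm).ne_zero
  obtain ⟨-, -, -, -, h002, -, -, -, -, -⟩ := nodalCubic_coeff_eqns h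
  have hprod : m 0 0 * m 1 0 * m 2 2 = 0 := by simpa [h02, h12] using h002
  simp only [mul_eq_zero] at hprod
  rcases hprod with (h00 | h10) | h22
  · obtain ⟨a, ζ, ha⟩ := exists_eq_smul_monomialHom_of_apply_zero_zero hdet h h02 h12 h00
    exact ⟨a, _, ha⟩
  · obtain ⟨a, ζ, ha⟩ := exists_eq_smul_monomialHom_of_apply_one_zero hdet h h02 h12 h10
    exact ⟨a, _, ha⟩
  · exact absurd (by simp [det_fin_three, h02, h12, h22]) hdet

end NodalCubic

end

open NodalCubic in
/-- Over a field `k` with `6` invertible, the projective stabilizer `S/Z` of the nodal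
cubic `X₀X₁X₂ + X₀³ + X₁³` is isomorphic to `μ₃(k) ⋊ C₂`, with `C₂` acting on the cube
roots of unity by inversion. -/
theorem stmt12 (k : Type*) [Field k] (h6 : IsUnit (6 : k))
    (S : Subgroup (GL (Fin 3) k))
    (hS : ∀ g : GL (Fin 3) k, g ∈ S ↔ ∃ c : kˣ,
        aeval (fun i => ∑ j : Fin 3, C ((g : Matrix (Fin 3) (Fin 3) k) i j) * X j)
            (X 0 * X 1 * X 2 + X 0 ^ 3 + X 1 ^ 3 : MvPolynomial (Fin 3) k)
          = (c : k) • (X 0 * X 1 * X 2 + X 0 ^ 3 + X 1 ^ 3 : MvPolynomial (Fin 3) k))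
    (Z : Subgroup (GL (Fin 3) k))
    (hZ : ∀ g : GL (Fin 3) k, g ∈ Z ↔ ∃ c : kˣ,
        (g : Matrix (Fin 3) (Fin 3) k) = (c : k) • (1 : Matrix (Fin 3) (Fin 3) k))
    [(Z.subgroupOf S).Normal] :
    Nonempty ((S ⧸ Z.subgroupOf S) ≃*
      (rootsOfUnity 3 k ⋊[invAction (rootsOfUnity 3 k)] ℤˣ)) := by
  have h3 : (3 : k) ≠ 0 := fun h => h6.ne_zero (by linear_combination 2 * h)
  have hmem (x) : monomialHom k 3 x ∈ S := (hS _).2 (scalesNodalCubic_monomialHom x)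
  let Ψ := (QuotientGroup.mk' (Z.subgroupOf S)).comp ((monomialHom k 3).codRestrict S hmem)
  have hinj : Function.Injective Ψ := by
    refine (injective_iff_map_eq_one Ψ).2 fun x hx => ?_
    rw [MonoidHom.comp_apply, QuotientGroup.mk'_apply, QuotientGroup.eq_one_iff,
      Subgroup.mem_subgroupOf, hZ] at hx
    obtain ⟨c, hc⟩ := hx
    exact eq_one_of_coe_monomialHom_eq_smul_one hc
  have hsurj : Function.Surjective Ψ := by
    intro q
    obtain ⟨s, rfl⟩ := QuotientGroup.mk'_surjective _ q
    obtain ⟨a, x, hx⟩ := exists_eq_smul_monomialHom h3 s.1.isUnit ((hS s).1 s.2)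
    refine ⟨x, QuotientGroup.eq.2 ?_⟩
    rw [Subgroup.mem_subgroupOf, hZ]
    exact ⟨a, by simp [hx]⟩
  exact ⟨(MulEquiv.ofBijective Ψ ⟨hinj, hsurj⟩).symm⟩
end

section
/- Let k be a field in which 6 is invertible and let f = X₀X₁X₂ + X₂³ ∈ k[X₀,X₁,X₂] (a smooth conic together with a non-tangent line). Then the projective stabilizer S_f/Z is isomorphic to the semidirect product kˣ ⋊ C₂, where C₂ is the cyclic group of order 2 and its nontrivial element acts on kˣ by inversion. -/
/-!
Write `f = X₂ · (X₀X₁ + X₂²)` and let `f(g·x) = c · f(x)`, with `Lᵢ` the linear forms given by the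
rows of `g`, so that `L₂ · (L₀L₁ + L₂²) = c · X₂ · (X₀X₁ + X₂²)`. Setting `X₂ = 0` shows that either
`L₂` is a multiple `r X₂` of `X₂`, or `L₀L₁ + L₂²` is divisible by `X₂`; in the second case the
smooth conic `X₀X₁ + X₂²` would be a product of two linear forms, which it is not. Cancelling `X₂`
then leaves `L₀ · rL₁ = c X₀X₁ + (c - r³) X₂²`, which forces `c = r³` and `{L₀, L₁}` to be multiples
of `{X₀, X₁}`. Hence `g` is, up to the scalar `r`, either `diag(t, t⁻¹, 1)` or that matrix composed
with the swap of `X₀` and `X₁`; these matrices form a copy of `kˣ ⋊ C₂` meeting the scalars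
trivially.
-/

open MvPolynomial

section LinearForms

variable {σ R : Type*} [Fintype σ] [CommSemiring R]

noncomputable def linearForm (v : σ → R) : MvPolynomial σ R := ∑ j, C (v j) * X j

noncomputable def linearSubst (M : Matrix σ σ R) : MvPolynomial σ R →ₐ[R] MvPolynomial σ R :=
  aeval fun i => linearForm (M i)

@[simp]
lemma linearSubst_X (M : Matrix σ σ R) (i : σ) : linearSubst M (X i) = linearForm (M i) :=
  aeval_X _ _

lemma coeff_single_linearForm [DecidableEq σ] (v : σ → R) (i : σ) :
    coeff (Finsupp.single i 1) (linearForm v) = v i := by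
  simp [linearForm, coeff_sum, coeff_C_mul, coeff_X, Finsupp.single_left_inj]

lemma linearForm_fin_three (v : Fin 3 → R) :
    linearForm v = C (v 0) * X 0 + C (v 1) * X 1 + C (v 2) * X 2 := by
  simp [linearForm, Fin.sum_univ_three]

end LinearForms

section TernaryQuadrics

variable {R : Type*} [CommRing R]

lemma coeff_eq_of_quadratic_eq {a₀₀ a₁₁ a₂₂ a₀₁ a₀₂ a₁₂ b₀₀ b₁₁ b₂₂ b₀₁ b₀₂ b₁₂ : R}
    (h : C a₀₀ * (X 0 * X 0) + C a₁₁ * (X 1 * X 1) + C a₂₂ * (X 2 * X 2) + C a₀₁ * (X 0 * X 1)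
        + C a₀₂ * (X 0 * X 2) + C a₁₂ * (X 1 * X 2)
      = (C b₀₀ * (X 0 * X 0) + C b₁₁ * (X 1 * X 1) + C b₂₂ * (X 2 * X 2) + C b₀₁ * (X 0 * X 1)
        + C b₀₂ * (X 0 * X 2) + C b₁₂ * (X 1 * X 2) : MvPolynomial (Fin 3) R)) :
    a₀₀ = b₀₀ ∧ a₁₁ = b₁₁ ∧ a₂₂ = b₂₂ ∧ a₀₁ = b₀₁ ∧ a₀₂ = b₀₂ ∧ a₁₂ = b₁₂ := by
  have hcoeff (i j : Fin 3) := congrArg (coeff (Finsupp.single i 1 + Finsupp.single j 1)) h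
  refine ⟨?_, ?_, ?_, ?_, ?_, ?_⟩ <;>
  [have := hcoeff 0 0; have := hcoeff 1 1; have := hcoeff 2 2;
    have := hcoeff 0 1; have := hcoeff 0 2; have := hcoeff 1 2] <;>
  simpa [coeff_mul_X', coeff_X, Finsupp.ext_iff, Finsupp.single_apply, Fin.forall_fin_succ]
    using this

lemma linearForm_mul_linearForm (u v : Fin 3 → R) :
    linearForm u * linearForm v
      = C (u 0 * v 0) * (X 0 * X 0) + C (u 1 * v 1) * (X 1 * X 1) + C (u 2 * v 2) * (X 2 * X 2)
        + C (u 0 * v 1 + u 1 * v 0) * (X 0 * X 1) + C (u 0 * v 2 + u 2 * v 0) * (X 0 * X 2)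
        + C (u 1 * v 2 + u 2 * v 1) * (X 1 * X 2) := by
  simp only [linearForm_fin_three, map_mul, map_add]
  ring

theorem linearForm_mul_linearForm_eq_conic [IsDomain R] {u v : Fin 3 → R} {α β : R} (hα : α ≠ 0)
    (h : linearForm u * linearForm v = C α * (X 0 * X 1) + C β * (X 2 * X 2)) :
    β = 0 ∧ (u 1 = 0 ∧ u 2 = 0 ∧ v 0 = 0 ∧ v 2 = 0 ∧ u 0 * v 1 = α ∨
      u 0 = 0 ∧ u 2 = 0 ∧ v 1 = 0 ∧ v 2 = 0 ∧ u 1 * v 0 = α) := by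
  obtain ⟨h00, h11, h22, h01, h02, h12⟩ := coeff_eq_of_quadratic_eq (b₀₀ := 0) (b₁₁ := 0)
    (b₀₂ := 0) (b₁₂ := 0) (b₂₂ := β) (b₀₁ := α) <| by
      rw [← linearForm_mul_linearForm, h]
      simp only [map_zero, zero_mul, zero_add, add_zero]
      ring
  by_cases hu₀ : u 0 = 0
  · simp only [hu₀, zero_mul, zero_add] at h00 h01 h02
    have hu₁ : u 1 ≠ 0 := left_ne_zero_of_mul (h01 ▸ hα)
    have hv₀ : v 0 ≠ 0 := right_ne_zero_of_mul (h01 ▸ hα)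
    have hv₁ : v 1 = 0 := (mul_eq_zero.mp h11).resolve_left hu₁
    have hu₂ : u 2 = 0 := (mul_eq_zero.mp h02).resolve_right hv₀
    have hv₂ : v 2 = 0 := by simpa [hu₂, hu₁] using h12
    exact ⟨by simp [← h22, hu₂], .inr ⟨hu₀, hu₂, hv₁, hv₂, h01⟩⟩
  · have hv₀ : v 0 = 0 := (mul_eq_zero.mp h00).resolve_left hu₀
    simp only [hv₀, mul_zero, add_zero] at h01 h02
    have hv₁ : v 1 ≠ 0 := right_ne_zero_of_mul (h01 ▸ hα)
    have hu₁ : u 1 = 0 := (mul_eq_zero.mp h11).resolve_right hv₁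
    have hv₂ : v 2 = 0 := (mul_eq_zero.mp h02).resolve_left hu₀
    have hu₂ : u 2 = 0 := by simpa [hv₂, hu₁, hv₁] using h12
    exact ⟨by simp [← h22, hu₂], .inl ⟨hu₁, hu₂, hv₀, hv₂, h01⟩⟩

end TernaryQuadrics

section ConicLine

variable {R : Type*} [CommRing R]

noncomputable def conicLine : MvPolynomial (Fin 3) R := X 0 * X 1 * X 2 + X 2 ^ 3

lemma linearSubst_conicLine (M : Matrix (Fin 3) (Fin 3) R) :
    linearSubst M conicLine = linearForm (M 2) *
      (linearForm (M 0) * linearForm (M 1) + linearForm (M 2) ^ 2) := by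
  simp only [conicLine, map_add, map_mul, map_pow, linearSubst_X]
  ring

theorem linearSubst_conicLine_row_two [IsDomain R] {M : Matrix (Fin 3) (Fin 3) R} {c : R}
    (hc : c ≠ 0) (h : linearSubst M conicLine = c • conicLine) : M 2 0 = 0 ∧ M 2 1 = 0 := by
  -- restrict to the line `X₂ = 0`
  have hπ := congrArg (aeval (R := R) ![(X 0 : MvPolynomial (Fin 3) R), X 1, 0]) h
  rw [linearSubst_conicLine] at hπ
  simp only [conicLine, linearForm_fin_three, aeval_eq_bind₁, map_mul, map_add, map_pow, algHom_C,
    algebraMap_eq, bind₁_X_right, Matrix.cons_val_zero, Matrix.cons_val_one, Matrix.cons_val,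
    mul_zero, add_zero, smul_add, map_smul, smul_zero, ne_eq, OfNat.ofNat_ne_zero,
    not_false_eq_true, zero_pow, mul_eq_zero] at hπ
  rcases hπ with hline | hconic
  · replace hline : linearForm ![M 2 0, M 2 1, 0] = 0 := by
      simpa [linearForm_fin_three] using hline
    exact ⟨by simpa [coeff_single_linearForm] using congrArg (coeff (Finsupp.single 0 1)) hline,
      by simpa [coeff_single_linearForm] using congrArg (coeff (Finsupp.single 1 1)) hline⟩
  · exfalso
    -- `(A + aX₂)(B + bX₂) + (P + pX₂)² = AB + P² + X₂ (aB + bA + 2pP + (ab + p²) X₂)`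
    set w : Fin 3 → R := ![M 0 2 * M 1 0 + M 1 2 * M 0 0 + 2 * M 2 2 * M 2 0,
      M 0 2 * M 1 1 + M 1 2 * M 0 1 + 2 * M 2 2 * M 2 1, M 0 2 * M 1 2 + M 2 2 ^ 2]
    have hfactor : linearForm (M 0) * linearForm (M 1) + linearForm (M 2) ^ 2
        = X 2 * linearForm w := by
      simp only [w, linearForm_fin_three, Matrix.cons_val, map_add, map_mul, map_pow, map_ofNat]
      linear_combination hconic
    rw [linearSubst_conicLine, hfactor, conicLine, smul_eq_C_mul] at h
    have hline_conic : linearForm (M 2) * linearForm w = C c * (X 0 * X 1) + C c * (X 2 * X 2) :=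
      mul_left_cancel₀ (X_ne_zero 2) (by linear_combination h)
    exact hc (linearForm_mul_linearForm_eq_conic hc hline_conic).1

theorem linearSubst_conicLine_eq_smul [IsDomain R] {M : Matrix (Fin 3) (Fin 3) R} {c : R}
    (hc : c ≠ 0) (h : linearSubst M conicLine = c • conicLine) :
    M 2 2 ^ 3 = c ∧ M 0 2 = 0 ∧ M 1 2 = 0 ∧ M 2 0 = 0 ∧ M 2 1 = 0 ∧
      (M 0 1 = 0 ∧ M 1 0 = 0 ∧ M 0 0 * M 1 1 = M 2 2 ^ 2 ∨
        M 0 0 = 0 ∧ M 1 1 = 0 ∧ M 0 1 * M 1 0 = M 2 2 ^ 2) := by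
  obtain ⟨h20, h21⟩ := linearSubst_conicLine_row_two hc h
  set r := M 2 2
  have hline : linearForm (M 2) = C r * X 2 := by simp [linearForm_fin_three, h20, h21, r]
  rw [linearSubst_conicLine, hline, conicLine, smul_eq_C_mul] at h
  have hconic : linearForm (M 0) * linearForm (r • M 1)
      = C c * (X 0 * X 1) + C (c - r ^ 3) * (X 2 * X 2) := by
    refine mul_left_cancel₀ (X_ne_zero 2) ?_
    simp only [linearForm_fin_three, Pi.smul_apply, smul_eq_mul, map_mul, map_sub, map_pow] at h ⊢
    linear_combination h
  obtain ⟨hcr, hshape⟩ := linearForm_mul_linearForm_eq_conic hc hconic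
  have hr : r ≠ 0 := fun hr => hc (by simpa [hr] using hcr)
  simp only [Pi.smul_apply, smul_eq_mul, mul_eq_zero, hr, false_or] at hshape
  refine ⟨(sub_eq_zero.mp hcr).symm, ?_⟩
  rcases hshape with ⟨h01, h02, h10, h12, hdet⟩ | ⟨h00, h02, h11, h12, hdet⟩
  · refine ⟨h02, h12, h20, h21, .inl ⟨h01, h10, mul_left_cancel₀ hr ?_⟩⟩
    linear_combination hdet + sub_eq_zero.mp hcr
  · refine ⟨h02, h12, h20, h21, .inr ⟨h00, h11, mul_left_cancel₀ hr ?_⟩⟩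
    linear_combination hdet + sub_eq_zero.mp hcr

end ConicLine

def involutionHom {G : Type*} [Monoid G] (w : G) (hw : w * w = 1) : ℤˣ →* G where
  toFun u := if u = 1 then 1 else w
  map_one' := if_pos rfl
  map_mul' u v := by
    rcases Int.units_eq_one_or u with rfl | rfl <;> rcases Int.units_eq_one_or v with rfl | rfl <;>
      simp [hw]

theorem nonempty_quotient_subgroupOf_mulEquiv {G H : Type*} [Group G] [Group H]
    {S Z : Subgroup H} [(Z.subgroupOf S).Normal] (θ : G →* H) (hS : ∀ x, θ x ∈ S)
    (hZ : ∀ x, θ x ∈ Z → x = 1) (hcover : ∀ g ∈ S, ∃ x, (θ x)⁻¹ * g ∈ Z) :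
    Nonempty ((S ⧸ Z.subgroupOf S) ≃* G) := by
  let Φ : G →* S ⧸ Z.subgroupOf S := (QuotientGroup.mk' _).comp (θ.codRestrict S hS)
  have hinj : Function.Injective Φ := by
    refine (injective_iff_map_eq_one Φ).mpr fun x hx => hZ x ?_
    simpa [Φ, QuotientGroup.eq_one_iff, Subgroup.mem_subgroupOf] using hx
  have hsurj : Function.Surjective Φ := by
    rintro ⟨g, hg⟩
    obtain ⟨x, hx⟩ := hcover g hg
    exact ⟨x, QuotientGroup.eq.mpr (by simpa [Subgroup.mem_subgroupOf] using hx)⟩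
  exact ⟨(MulEquiv.ofBijective Φ ⟨hinj, hsurj⟩).symm⟩

lemma SemidirectProduct.eq_inl_or_eq_inl_mul_inr_neg_one {N : Type*} [Group N]
    {φ : ℤˣ →* MulAut N} (x : N ⋊[φ] ℤˣ) :
    x = .inl x.left ∨ x = .inl x.left * .inr (-1) := by
  rcases Int.units_eq_one_or x.right with h | h
  · exact .inl (SemidirectProduct.ext rfl (by simp [h]))
  · exact .inr (SemidirectProduct.ext (by simp) (by simp [h]))

section TorusSwap

variable {R : Type*} [CommRing R]

def torusHom : Rˣ →* GL (Fin 3) R where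
  toFun t :=
    { val := !![(t : R), 0, 0; 0, ↑t⁻¹, 0; 0, 0, 1]
      inv := !![↑t⁻¹, 0, 0; 0, (t : R), 0; 0, 0, 1]
      val_inv := by simp [Matrix.one_fin_three]
      inv_val := by simp [Matrix.one_fin_three] }
  map_one' := by ext : 1; simp [Matrix.one_fin_three]
  map_mul' t s := by ext : 1; simp [mul_comm]

def swapXY : GL (Fin 3) R where
  val := !![0, 1, 0; 1, 0, 0; 0, 0, 1]
  inv := !![0, 1, 0; 1, 0, 0; 0, 0, 1]
  val_inv := by simp [Matrix.one_fin_three]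
  inv_val := by simp [Matrix.one_fin_three]

lemma swapXY_mul_self : (swapXY * swapXY : GL (Fin 3) R) = 1 := by
  ext : 1; simp [swapXY, Matrix.one_fin_three]

lemma swapXY_conj_torusHom (t : Rˣ) : swapXY * torusHom t * swapXY⁻¹ = torusHom t⁻¹ := by
  rw [← inv_eq_of_mul_eq_one_right swapXY_mul_self]
  ext : 1
  simp [swapXY, torusHom]

def torusSwapHom : Rˣ ⋊[invAction Rˣ] ℤˣ →* GL (Fin 3) R :=
  SemidirectProduct.lift torusHom (involutionHom swapXY swapXY_mul_self) fun u => by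
    ext t : 1
    rcases Int.units_eq_one_or u with rfl | rfl
    · simp [involutionHom]
    · simp [involutionHom, invAction, swapXY_conj_torusHom]

lemma coe_torusSwapHom_inl (t : Rˣ) :
    (torusSwapHom (.inl t) : Matrix (Fin 3) (Fin 3) R)
      = !![(t : R), 0, 0; 0, ↑t⁻¹, 0; 0, 0, 1] := by
  simp [torusSwapHom, torusHom]

lemma coe_torusSwapHom_inl_mul_inr_neg_one (t : Rˣ) :
    (torusSwapHom (.inl t * .inr (-1)) : Matrix (Fin 3) (Fin 3) R)
      = !![0, (t : R), 0; ↑t⁻¹, 0, 0; 0, 0, 1] := by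
  simp [torusSwapHom, torusHom, involutionHom, swapXY]

end TorusSwap

section Stabilizer

variable {R : Type*} [CommRing R]

lemma linearSubst_torusSwapHom_conicLine (x : Rˣ ⋊[invAction Rˣ] ℤˣ) :
    linearSubst (torusSwapHom x : Matrix (Fin 3) (Fin 3) R) conicLine = conicLine := by
  have ht : (C ((x.left : Rˣ) : R) * C ((x.left⁻¹ : Rˣ) : R) : MvPolynomial (Fin 3) R) = 1 := by
    rw [← map_mul, Units.mul_inv, map_one]
  rcases x.eq_inl_or_eq_inl_mul_inr_neg_one with hx | hx <;>
    [rw [hx, coe_torusSwapHom_inl]; rw [hx, coe_torusSwapHom_inl_mul_inr_neg_one]] <;>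
  · simp only [conicLine, map_add, map_mul, map_pow, linearSubst_X, linearForm_fin_three,
      Matrix.of_apply, Matrix.cons_val', Matrix.cons_val_zero, Matrix.cons_val_one,
      Matrix.cons_val, Matrix.cons_val_fin_one, C_0, C_1, zero_mul, one_mul, zero_add, add_zero]
    linear_combination (X 0 * X 1 * X 2 : MvPolynomial (Fin 3) R) * ht

lemma eq_one_of_torusSwapHom_eq_smul_one [Nontrivial R] {x : Rˣ ⋊[invAction Rˣ] ℤˣ} {c : R}
    (h : (torusSwapHom x : Matrix (Fin 3) (Fin 3) R) = c • 1) : x = 1 := by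
  have h00 := congrFun (congrFun h 0) 0
  have h22 := congrFun (congrFun h 2) 2
  rcases x.eq_inl_or_eq_inl_mul_inr_neg_one with hx | hx <;> rw [hx] at h00 h22 ⊢
  · simp only [coe_torusSwapHom_inl, Matrix.of_apply, Matrix.cons_val', Matrix.cons_val_zero,
      Matrix.cons_val, Matrix.cons_val_fin_one, Matrix.smul_apply, Matrix.one_apply_eq,
      smul_eq_mul, mul_one] at h00 h22
    rw [show x.left = 1 from Units.ext (h00.trans h22.symm), map_one]
  · simp only [coe_torusSwapHom_inl_mul_inr_neg_one, Matrix.of_apply, Matrix.cons_val',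
      Matrix.cons_val_zero, Matrix.cons_val, Matrix.cons_val_fin_one, Matrix.smul_apply,
      Matrix.one_apply_eq, smul_eq_mul, mul_one] at h00 h22
    exact absurd (h00.trans h22.symm) zero_ne_one

theorem exists_torusSwapHom_of_linearSubst_conicLine {k : Type*} [Field k]
    {M : Matrix (Fin 3) (Fin 3) k} {c : k} (hc : c ≠ 0)
    (h : linearSubst M conicLine = c • conicLine) :
    ∃ (x : kˣ ⋊[invAction kˣ] ℤˣ) (r : kˣ),
      M = (r : k) • (torusSwapHom x : Matrix (Fin 3) (Fin 3) k) := by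
  obtain ⟨hcr, h02, h12, h20, h21, hshape⟩ := linearSubst_conicLine_eq_smul hc h
  have hr : M 2 2 ≠ 0 := fun hr => hc (by rw [← hcr, hr, zero_pow three_ne_zero])
  rcases hshape with ⟨h01, h10, hdet⟩ | ⟨h00, h11, hdet⟩
  · have h00 : M 0 0 ≠ 0 := left_ne_zero_of_mul (hdet ▸ pow_ne_zero 2 hr)
    refine ⟨.inl (Units.mk0 _ h00 / Units.mk0 _ hr), Units.mk0 _ hr, ?_⟩
    rw [coe_torusSwapHom_inl]
    ext i j
    fin_cases i <;> fin_cases j <;> simp [h01, h02, h10, h12, h20, h21]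
    all_goals field_simp
    linear_combination hdet
  · have h01 : M 0 1 ≠ 0 := left_ne_zero_of_mul (hdet ▸ pow_ne_zero 2 hr)
    refine ⟨.inl (Units.mk0 _ h01 / Units.mk0 _ hr) * .inr (-1), Units.mk0 _ hr, ?_⟩
    rw [coe_torusSwapHom_inl_mul_inr_neg_one]
    ext i j
    fin_cases i <;> fin_cases j <;> simp [h00, h02, h11, h12, h20, h21]
    all_goals field_simp
    linear_combination hdet

end Stabilizer

theorem stmt13_general (k : Type*) [Field k]
    (S : Subgroup (GL (Fin 3) k))
    (hS : ∀ g : GL (Fin 3) k, g ∈ S ↔ ∃ c : kˣ,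
        aeval (fun i => ∑ j : Fin 3, C ((g : Matrix (Fin 3) (Fin 3) k) i j) * X j)
            (X 0 * X 1 * X 2 + X 2 ^ 3 : MvPolynomial (Fin 3) k)
          = (c : k) • (X 0 * X 1 * X 2 + X 2 ^ 3 : MvPolynomial (Fin 3) k))
    (Z : Subgroup (GL (Fin 3) k))
    (hZ : ∀ g : GL (Fin 3) k, g ∈ Z ↔ ∃ c : kˣ,
        (g : Matrix (Fin 3) (Fin 3) k) = (c : k) • (1 : Matrix (Fin 3) (Fin 3) k))
    [(Z.subgroupOf S).Normal] :
    Nonempty ((S ⧸ Z.subgroupOf S) ≃* (kˣ ⋊[invAction kˣ] ℤˣ)) := by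
  refine nonempty_quotient_subgroupOf_mulEquiv torusSwapHom (fun x => ?_) (fun x hx => ?_)
    fun g hg => ?_
  · refine (hS _).mpr ⟨1, ?_⟩
    rw [Units.val_one, one_smul]
    exact linearSubst_torusSwapHom_conicLine x
  · obtain ⟨c, hc⟩ := (hZ _).mp hx
    exact eq_one_of_torusSwapHom_eq_smul_one hc
  · obtain ⟨c, hc⟩ := (hS g).mp hg
    obtain ⟨x, r, hg⟩ := exists_torusSwapHom_of_linearSubst_conicLine c.ne_zero hc
    refine ⟨x, (hZ _).mpr ⟨r, ?_⟩⟩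
    rw [Units.val_mul, hg, Matrix.mul_smul, ← Units.val_mul, inv_mul_cancel, Units.val_one]

/-- Over a field `k` with `6` invertible, the projective stabilizer `S/Z` of the cubic
`X₀X₁X₂ + X₂³` (a smooth conic together with a non-tangent line) is isomorphic to
`kˣ ⋊ C₂`, with `C₂` acting on `kˣ` by inversion. -/
theorem stmt13 (k : Type*) [Field k] (h6 : IsUnit (6 : k))
    (S : Subgroup (GL (Fin 3) k))
    (hS : ∀ g : GL (Fin 3) k, g ∈ S ↔ ∃ c : kˣ,
        aeval (fun i => ∑ j : Fin 3, C ((g : Matrix (Fin 3) (Fin 3) k) i j) * X j)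
            (X 0 * X 1 * X 2 + X 2 ^ 3 : MvPolynomial (Fin 3) k)
          = (c : k) • (X 0 * X 1 * X 2 + X 2 ^ 3 : MvPolynomial (Fin 3) k))
    (Z : Subgroup (GL (Fin 3) k))
    (hZ : ∀ g : GL (Fin 3) k, g ∈ Z ↔ ∃ c : kˣ,
        (g : Matrix (Fin 3) (Fin 3) k) = (c : k) • (1 : Matrix (Fin 3) (Fin 3) k))
    [(Z.subgroupOf S).Normal] :
    Nonempty ((S ⧸ Z.subgroupOf S) ≃* (kˣ ⋊[invAction kˣ] ℤˣ)) :=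
  stmt13_general k S hS Z hZ
end

section
/- Let k be a field in which 6 is invertible and let f = X₀²X₁ ∈ k[X₀,X₁,X₂] (a double line and a single line). Then the stabilizer up to scalar S_f = {g ∈ GL₃(k) : ∃ c ∈ kˣ, f·g = c·f} equals the subgroup of invertible matrices g whose entries g₀₁, g₀₂, g₁₀, g₁₂ all vanish (i.e., matrices of the form with first row (a,0,0), second row (0,b,0), and arbitrary invertible third row); moreover the projective stabilizer S_f/Z is isomorphic to the direct product of two copies of the group of affine transformations x ↦ ax + b of the line over k (a ∈ kˣ, b ∈ k). -/
/-!
Restricting `g · X₀²X₁ = c X₀²X₁` to the line `(t : 1 : v + u t)` gives an identity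
`(a t + p)² (r t + b) = c t²` in `k[t]`, which forces `p = r = 0`; two such lines show that `g`
sends `X₀ ↦ g₀₀ X₀` and `X₁ ↦ g₁₁ X₁`. Such a `g` preserves the lines `X₁ = 0` and `X₀ = 0`
and fixes their intersection `(0 : 0 : 1)`, so it acts on each of them, minus that point, by an
affine transformation. The resulting homomorphism to the product of two affine groups is onto,
and its kernel consists of the scalar matrices.
-/

open MvPolynomial

section

variable {k : Type*} [Field k]

theorem Polynomial.eq_zero_of_linear_sq_mul_linear_eq_C_mul_X_sq {a p r b c : k} (hc : c ≠ 0)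
    (h : (Polynomial.C a * Polynomial.X + Polynomial.C p) ^ 2
        * (Polynomial.C r * Polynomial.X + Polynomial.C b) = Polynomial.C c * Polynomial.X ^ 2) :
    p = 0 ∧ r = 0 := by
  open Polynomial in
  have hexp : (C a * X + C p) ^ 2 * (C r * X + C b) = C (a ^ 2 * r) * X ^ 3
      + C (a ^ 2 * b + 2 * a * p * r) * X ^ 2 + C (2 * a * p * b + p ^ 2 * r) * X ^ 1
      + C (p ^ 2 * b) * X ^ 0 := by
    simp only [map_add, map_mul, map_pow, map_ofNat]; ring
  rw [hexp] at h
  have h3 := congrArg (Polynomial.coeff · 3) h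
  have h2 := congrArg (Polynomial.coeff · 2) h
  have h0 := congrArg (Polynomial.coeff · 0) h
  simp only [Polynomial.coeff_add, Polynomial.coeff_C_mul_X_pow] at h3 h2 h0
  norm_num at h3 h2 h0
  have hr : r = 0 := h3.resolve_left fun ha => hc (by simp [← h2, ha])
  exact ⟨h0.resolve_right fun hb => hc (by simp [← h2, hb, hr]), hr⟩

/-- Substituting `X ↦ A X` sends `X 0 ↦ A 0 0 • X 0` and `X 1 ↦ A 1 1 • X 1`. -/
def ScalesX0X1 (A : Matrix (Fin 3) (Fin 3) k) : Prop :=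
  A 0 1 = 0 ∧ A 0 2 = 0 ∧ A 1 0 = 0 ∧ A 1 2 = 0

namespace ScalesX0X1

variable {A : Matrix (Fin 3) (Fin 3) k}

theorem det_eq (hA : ScalesX0X1 A) : A.det = A 0 0 * A 1 1 * A 2 2 := by
  obtain ⟨h01, h02, h10, h12⟩ := hA
  rw [Matrix.det_fin_three, h01, h02, h10, h12]
  ring

theorem diag_ne_zero {g : GL (Fin 3) k} (hg : ScalesX0X1 (g : Matrix (Fin 3) (Fin 3) k))
    (i : Fin 3) : (g : Matrix (Fin 3) (Fin 3) k) i i ≠ 0 := by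
  have hdet := (Matrix.isUnit_iff_isUnit_det _).mp g.isUnit
  rw [hg.det_eq, isUnit_iff_ne_zero] at hdet
  fin_cases i <;> simp_all

theorem aeval_X0_sq_X1 (hA : ScalesX0X1 A) :
    aeval (fun i => ∑ j : Fin 3, C (A i j) * X j) (X 0 ^ 2 * X 1 : MvPolynomial (Fin 3) k)
      = (A 0 0 ^ 2 * A 1 1) • (X 0 ^ 2 * X 1 : MvPolynomial (Fin 3) k) := by
  obtain ⟨h01, h02, h10, h12⟩ := hA
  simp only [map_mul, map_pow, aeval_X, Fin.sum_univ_three, h01, h02, h10, h12, C_0, zero_mul,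
    add_zero, zero_add, smul_eq_C_mul]
  ring

theorem exists_eq_smul_one_iff (hA : ScalesX0X1 A) (h22 : A 2 2 ≠ 0) :
    (∃ c : kˣ, A = (c : k) • (1 : Matrix (Fin 3) (Fin 3) k)) ↔
      (A 2 0 = 0 ∧ A 2 2 = A 0 0) ∧ (A 2 1 = 0 ∧ A 2 2 = A 1 1) := by
  obtain ⟨h01, h02, h10, h12⟩ := hA
  constructor
  · rintro ⟨c, rfl⟩
    simp
  · rintro ⟨⟨h20, h00⟩, ⟨h21, h11⟩⟩
    refine ⟨Units.mk0 _ h22, ?_⟩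
    ext i j
    fin_cases i <;> fin_cases j <;> simp [h01, h02, h10, h12, h20, h21, ← h00, ← h11]

end ScalesX0X1

theorem scalesX0X1_of_aeval_X0_sq_X1_eq_smul {A : Matrix (Fin 3) (Fin 3) k} {c : k} (hc : c ≠ 0)
    (h : aeval (fun i => ∑ j : Fin 3, C (A i j) * X j) (X 0 ^ 2 * X 1 : MvPolynomial (Fin 3) k)
      = c • (X 0 ^ 2 * X 1 : MvPolynomial (Fin 3) k)) :
    ScalesX0X1 A := by
  have slice (u v : k) : A 0 1 + A 0 2 * v = 0 ∧ A 1 0 + A 1 2 * u = 0 := by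
    have hslice := congrArg
      (aeval ![Polynomial.X, 1, Polynomial.C v + Polynomial.C u * Polynomial.X]) h
    simp only [map_add, map_mul, map_pow, map_smul, aeval_X, Fin.sum_univ_three, aeval_C,
      Polynomial.algebraMap_eq, Matrix.cons_val_zero, Matrix.cons_val_one, Matrix.cons_val_two,
      Matrix.head_cons, Matrix.tail_cons, mul_one, Polynomial.smul_eq_C_mul] at hslice
    exact Polynomial.eq_zero_of_linear_sq_mul_linear_eq_C_mul_X_sq hc
      (a := A 0 0 + A 0 2 * u) (b := A 1 1 + A 1 2 * v)
      (by rw [← hslice]; simp only [map_add, map_mul]; ring)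
  obtain ⟨h01, h10⟩ := slice 0 0
  obtain ⟨h02, h12⟩ := slice 1 1
  simp only [mul_zero, add_zero, mul_one] at h01 h10 h02 h12
  exact ⟨h01, by simpa [h01] using h02, h10, by simpa [h10] using h12⟩

theorem exists_aeval_X0_sq_X1_eq_smul_iff (g : GL (Fin 3) k) :
    (∃ c : kˣ, aeval (fun i => ∑ j : Fin 3, C ((g : Matrix (Fin 3) (Fin 3) k) i j) * X j)
        (X 0 ^ 2 * X 1 : MvPolynomial (Fin 3) k)
          = (c : k) • (X 0 ^ 2 * X 1 : MvPolynomial (Fin 3) k)) ↔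
      ScalesX0X1 (g : Matrix (Fin 3) (Fin 3) k) :=
  ⟨fun ⟨c, hc⟩ => scalesX0X1_of_aeval_X0_sq_X1_eq_smul c.ne_zero hc, fun hg =>
    ⟨Units.mk0 _ (mul_ne_zero (pow_ne_zero 2 (hg.diag_ne_zero 0)) (hg.diag_ne_zero 1)),
      hg.aeval_X0_sq_X1⟩⟩

/-- For `i ∈ {0, 1}`, the map induced by `A` on the line `X (1 - i) = 0` in the affine
coordinate `X 2 / X i`. -/
def lineChartMap (A : Matrix (Fin 3) (Fin 3) k) (i : Fin 3) : k →ᵃ[k] k where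
  toFun x := (A 2 i + A 2 2 * x) / A i i
  linear := (A 2 2 / A i i) • LinearMap.id
  map_vadd' x v := by
    simp only [vadd_eq_add, LinearMap.smul_apply, LinearMap.id_apply, smul_eq_mul]
    ring

@[simp]
theorem lineChartMap_apply (A : Matrix (Fin 3) (Fin 3) k) (i : Fin 3) (x : k) :
    lineChartMap A i x = (A 2 i + A 2 2 * x) / A i i :=
  rfl

theorem lineChartMap_one {i : Fin 3} (hi : i ≠ 2) :
    lineChartMap (1 : Matrix (Fin 3) (Fin 3) k) i = 1 := by
  ext x
  simp [hi.symm]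

theorem lineChartMap_mul {A B : Matrix (Fin 3) (Fin 3) k} (hA : ScalesX0X1 A) (hB : ScalesX0X1 B)
    {i : Fin 3} (hi : i ≠ 2) (hBi : B i i ≠ 0) :
    lineChartMap (A * B) i = lineChartMap A i * lineChartMap B i := by
  obtain ⟨a01, a02, a10, a12⟩ := hA
  obtain ⟨b01, b02, b10, b12⟩ := hB
  obtain rfl | rfl : i = 0 ∨ i = 1 := by fin_cases i <;> simp_all
  all_goals
    ext x
    simp only [AffineMap.coe_mul, Function.comp_apply, lineChartMap_apply, Matrix.mul_apply,
      Fin.sum_univ_three, a01, a02, a10, a12, b01, b02, b10, b12, mul_zero, zero_mul, add_zero,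
      zero_add]
    field_simp
    ring

theorem lineChartMap_eq_id_iff {A : Matrix (Fin 3) (Fin 3) k} {i : Fin 3} (hii : A i i ≠ 0) :
    (∀ x, lineChartMap A i x = x) ↔ A 2 i = 0 ∧ A 2 2 = A i i := by
  simp only [lineChartMap_apply, div_eq_iff hii]
  refine ⟨fun h => ?_, fun ⟨h2i, h22⟩ x => by rw [h2i, h22, zero_add, mul_comm]⟩
  have h0 := h 0
  have h1 := h 1
  simp only [mul_zero, add_zero, zero_mul, mul_one, one_mul] at h0 h1
  exact ⟨h0, by simpa [h0] using h1⟩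

theorem AffineEquiv.apply_eq_add_mul_sub (e : k ≃ᵃ[k] k) (x : k) :
    e x = e 0 + x * (e 1 - e 0) := by
  simpa [AffineMap.lineMap_apply_ring', add_comm] using e.apply_lineMap 0 1 x

section LineChartHom

variable {S : Subgroup (GL (Fin 3) k)}
  (hS : ∀ g : GL (Fin 3) k, g ∈ S ↔ ScalesX0X1 (g : Matrix (Fin 3) (Fin 3) k))

def lineChartHom (i : Fin 3) (hi : i ≠ 2) : S →* (k ≃ᵃ[k] k) :=
  AffineEquiv.equivUnitsAffineMap.symm.toMonoidHom.comp <| MonoidHom.toHomUnits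
    { toFun g := lineChartMap (g.1 : Matrix (Fin 3) (Fin 3) k) i
      map_one' := lineChartMap_one hi
      map_mul' g h := lineChartMap_mul ((hS g).mp g.2) ((hS h).mp h.2) hi
        (((hS h).mp h.2).diag_ne_zero i) }

@[simp]
theorem lineChartHom_apply {i : Fin 3} (hi : i ≠ 2) (g : S) (x : k) :
    lineChartHom hS i hi g x = lineChartMap (g.1 : Matrix (Fin 3) (Fin 3) k) i x :=
  rfl

def lineChartsHom : S →* (k ≃ᵃ[k] k) × (k ≃ᵃ[k] k) :=
  (lineChartHom hS 0 (by decide)).prod (lineChartHom hS 1 (by decide))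

theorem mem_ker_lineChartsHom_iff (g : S) :
    g ∈ (lineChartsHom hS).ker ↔
      ∃ c : kˣ, (g.1 : Matrix (Fin 3) (Fin 3) k) = (c : k) • 1 := by
  have hg := (hS g).mp g.2
  rw [hg.exists_eq_smul_one_iff (hg.diag_ne_zero 2), ← lineChartMap_eq_id_iff (hg.diag_ne_zero 0),
    ← lineChartMap_eq_id_iff (hg.diag_ne_zero 1)]
  simp [lineChartsHom, MonoidHom.mem_ker, Prod.ext_iff, AffineEquiv.ext_iff]

theorem lineChartsHom_surjective : Function.Surjective (lineChartsHom hS) := by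
  rintro ⟨e₁, e₂⟩
  set m₁ := e₁ 1 - e₁ 0
  set m₂ := e₂ 1 - e₂ 0
  have hm₁ : m₁ ≠ 0 := sub_ne_zero.mpr (e₁.injective.ne one_ne_zero)
  have hm₂ : m₂ ≠ 0 := sub_ne_zero.mpr (e₂.injective.ne one_ne_zero)
  let N : Matrix (Fin 3) (Fin 3) k := !![m₁⁻¹, 0, 0; 0, m₂⁻¹, 0; e₁ 0 * m₁⁻¹, e₂ 0 * m₂⁻¹, 1]
  have hN : N.det ≠ 0 := by simp [N, Matrix.det_fin_three, hm₁, hm₂]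
  have hNS : Matrix.GeneralLinearGroup.mkOfDetNeZero N hN ∈ S := by
    rw [hS]
    simp [ScalesX0X1, N]
  refine ⟨⟨_, hNS⟩, Prod.ext ?_ ?_⟩ <;> ext x <;>
    simp [lineChartsHom, N, add_mul, hm₁, hm₂, m₁, m₂] <;>
    exact (AffineEquiv.apply_eq_add_mul_sub _ x).symm

end LineChartHom

end

theorem stmt14_general (k : Type*) [Field k]
    (S : Subgroup (GL (Fin 3) k))
    (hS : ∀ g : GL (Fin 3) k, g ∈ S ↔ ∃ c : kˣ,
        aeval (fun i => ∑ j : Fin 3, C ((g : Matrix (Fin 3) (Fin 3) k) i j) * X j)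
            (X 0 ^ 2 * X 1 : MvPolynomial (Fin 3) k)
          = (c : k) • (X 0 ^ 2 * X 1 : MvPolynomial (Fin 3) k))
    (Z : Subgroup (GL (Fin 3) k))
    (hZ : ∀ g : GL (Fin 3) k, g ∈ Z ↔ ∃ c : kˣ,
        (g : Matrix (Fin 3) (Fin 3) k) = (c : k) • (1 : Matrix (Fin 3) (Fin 3) k))
    [(Z.subgroupOf S).Normal] :
    (∀ g : GL (Fin 3) k, g ∈ S ↔
        ((g : Matrix (Fin 3) (Fin 3) k) 0 1 = 0 ∧
         (g : Matrix (Fin 3) (Fin 3) k) 0 2 = 0 ∧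
         (g : Matrix (Fin 3) (Fin 3) k) 1 0 = 0 ∧
         (g : Matrix (Fin 3) (Fin 3) k) 1 2 = 0)) ∧
    Nonempty ((S ⧸ Z.subgroupOf S) ≃* ((k ≃ᵃ[k] k) × (k ≃ᵃ[k] k))) := by
  have hS' (g : GL (Fin 3) k) : g ∈ S ↔ ScalesX0X1 (g : Matrix (Fin 3) (Fin 3) k) :=
    (hS g).trans (exists_aeval_X0_sq_X1_eq_smul_iff g)
  have hker : Z.subgroupOf S = (lineChartsHom hS').ker := by
    ext g
    rw [Subgroup.mem_subgroupOf, hZ, mem_ker_lineChartsHom_iff]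
  exact ⟨hS', ⟨(QuotientGroup.quotientMulEquivOfEq hker).trans
    (QuotientGroup.quotientKerEquivOfSurjective _ (lineChartsHom_surjective hS'))⟩⟩

/-- Over a field `k` with `6` invertible, the stabilizer up to scalar `S` of the cubic
`X₀²X₁` (a double line and a single line) consists exactly of the invertible matrices
with `g₀₁ = g₀₂ = g₁₀ = g₁₂ = 0`, and the projective stabilizer `S/Z` is isomorphic to
the direct product of two copies of the group of affine transformations of the line
over `k`. -/
theorem stmt14 (k : Type*) [Field k] (h6 : IsUnit (6 : k))
    (S : Subgroup (GL (Fin 3) k))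
    (hS : ∀ g : GL (Fin 3) k, g ∈ S ↔ ∃ c : kˣ,
        aeval (fun i => ∑ j : Fin 3, C ((g : Matrix (Fin 3) (Fin 3) k) i j) * X j)
            (X 0 ^ 2 * X 1 : MvPolynomial (Fin 3) k)
          = (c : k) • (X 0 ^ 2 * X 1 : MvPolynomial (Fin 3) k))
    (Z : Subgroup (GL (Fin 3) k))
    (hZ : ∀ g : GL (Fin 3) k, g ∈ Z ↔ ∃ c : kˣ,
        (g : Matrix (Fin 3) (Fin 3) k) = (c : k) • (1 : Matrix (Fin 3) (Fin 3) k))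
    [(Z.subgroupOf S).Normal] :
    (∀ g : GL (Fin 3) k, g ∈ S ↔
        ((g : Matrix (Fin 3) (Fin 3) k) 0 1 = 0 ∧
         (g : Matrix (Fin 3) (Fin 3) k) 0 2 = 0 ∧
         (g : Matrix (Fin 3) (Fin 3) k) 1 0 = 0 ∧
         (g : Matrix (Fin 3) (Fin 3) k) 1 2 = 0)) ∧
    Nonempty ((S ⧸ Z.subgroupOf S) ≃* ((k ≃ᵃ[k] k) × (k ≃ᵃ[k] k))) :=
  stmt14_general k S hS Z hZ
end
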